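/- arXiv:1802.07152 — 3 statements merged into one kernel-verified Lean document; each statement's English description precedes it below -/
import Mathlib

section
/- Assume the coefficients ρ₁₁, ρ₁₂, ρ₂₂, μ, λ, q, r : ℝ³ → ℝ are smooth, bounded from below by a constant c > 0, have bounded derivatives, and satisfy ρ₁₁ρ₂₂ − ρ₁₂² > 0 and λr − q² > 0 on ℝ³. Let T > 0, let Ω ⊆ ℝ³ be an open set, and let u = (u^s, u^f) : ℝ × ℝ³ → ℝ³ × ℝ³ be a smooth pair of time-dependent vector fields such that there is a compact set K ⊆ Ω with supp u(t, ·) ⊆ K for every t ∈ [0, T], and such that M(x) ∂²_t u(t,x) + P(D)u(t, ·)(x) = 0 for all (t, x) ∈ (0, T) × Ω. Then E_Ω(t, u) = E_Ω(0, u) for all t ∈ [0, T]. -/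
open MeasureTheory Set Filter Matrix

noncomputable section

abbrev V3 := Fin 3 → ℝ

/-- Partial derivative of a scalar function in direction `j`. -/
def pd (j : Fin 3) (f : V3 → ℝ) (x : V3) : ℝ := fderiv ℝ f x (Pi.single j 1)

/-- Gradient of a scalar function. -/
def grad (f : V3 → ℝ) (x : V3) : V3 := fun i => pd i f x

/-- Divergence of a vector field. -/
def vdiv (v : V3 → V3) (x : V3) : ℝ := ∑ i, pd i (fun y => v y i) x

/-- Jacobian matrix `(∇v)_{ij} = ∂_j v_i`. -/
def jac (v : V3 → V3) (x : V3) : Matrix (Fin 3) (Fin 3) ℝ := fun i j => pd j (fun y => v y i) x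

/-- Row-wise divergence of a matrix field. -/
def mdiv (S : V3 → Matrix (Fin 3) (Fin 3) ℝ) (x : V3) : V3 :=
  fun i => ∑ j, pd j (fun y => S y i j) x

/-- Componentwise Laplacian of a vector field. -/
def vlap (v : V3 → V3) (x : V3) : V3 :=
  fun i => ∑ j, pd j (fun y => pd j (fun z => v z i) y) x

/-- Symmetrized gradient `ε(v) = (∇v + (∇v)ᵀ)/2`. -/
def eps (v : V3 → V3) (x : V3) : Matrix (Fin 3) (Fin 3) ℝ := (1/2 : ℝ) • (jac v x + (jac v x)ᵀ)

/-- The elastic operator `Δ_{μ,λ} v = div(μ(∇v + (∇v)ᵀ)) + ∇(λ div v)`. -/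
def elast (μ lam : V3 → ℝ) (v : V3 → V3) (x : V3) : V3 :=
  mdiv (fun y => μ y • (jac v y + (jac v y)ᵀ)) x + grad (fun y => lam y * vdiv v y) x

/-- Euclidean dot product on `ℝ³`. -/
def dot3 (a b : V3) : ℝ := ∑ i, a i * b i

/-- Frobenius inner product `A : B = tr(ABᵀ)`. -/
def frob (A B : Matrix (Fin 3) (Fin 3) ℝ) : ℝ := (A * Bᵀ).trace

/-- First component of `P(D)v` for a pair `v = (vs, vf)`. -/
def PD1 (μ lam q : V3 → ℝ) (vs vf : V3 → V3) (x : V3) : V3 :=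
  -(elast μ lam vs x) - grad (fun y => q y * vdiv vf y) x

/-- Second component of `P(D)v` for a pair `v = (vs, vf)`. -/
def PD2 (q r : V3 → ℝ) (vs vf : V3 → V3) (x : V3) : V3 :=
  -(grad (fun y => q y * vdiv vs y) x) - grad (fun y => r y * vdiv vf y) x

/-- Integrand of the bilinear form `B_Ω`. -/
def Bint (lam μ q r : V3 → ℝ) (vs vf ws wf : V3 → V3) (x : V3) : ℝ :=
  lam x * vdiv vs x * vdiv ws x + 2 * μ x * frob (eps vs x) (eps ws x)
    + r x * vdiv vf x * vdiv wf x
    + q x * (vdiv vf x * vdiv ws x + vdiv vs x * vdiv wf x)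

/-- The bilinear form `B_Ω(v, w)`. -/
def Bform (lam μ q r : V3 → ℝ) (Ω : Set V3) (vs vf ws wf : V3 → V3) : ℝ :=
  ∫ x in Ω, Bint lam μ q r vs vf ws wf x

/-- Time derivative of a time-dependent vector field. -/
def dtv (v : ℝ → V3 → V3) (t : ℝ) (x : V3) : V3 := fun i => deriv (fun s => v s x i) t

/-- Second time derivative of a time-dependent vector field. -/
def dt2v (v : ℝ → V3 → V3) (t : ℝ) (x : V3) : V3 := fun i => deriv (fun s => dtv v s x i) t

/-- The energy `E_Ω(t, u)` of the pair `u = (us, uf)` over `Ω` at time `t`. -/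
def energy (ρ11 ρ12 ρ22 lam μ q r : V3 → ℝ) (Ω : Set V3) (us uf : ℝ → V3 → V3) (t : ℝ) : ℝ :=
  (∫ x in Ω, (ρ11 x * dot3 (dtv us t x) (dtv us t x) + 2 * ρ12 x * dot3 (dtv us t x) (dtv uf t x)
      + ρ22 x * dot3 (dtv uf t x) (dtv uf t x)))
  + Bform lam μ q r Ω (us t) (uf t) (us t) (uf t)

/-- A coefficient is smooth, bounded below by `c`, and has bounded derivative. -/
def GoodCoeff (c : ℝ) (f : V3 → ℝ) : Prop :=
  ContDiff ℝ (⊤ : ℕ∞) f ∧ (∀ x, c ≤ f x) ∧ ∃ C, ∀ x, ‖fderiv ℝ f x‖ ≤ C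

/-- Euclidean norm on `ℝ³` (the product norm on `Fin 3 → ℝ` is the sup norm). -/
def enorm3 (x : V3) : ℝ := Real.sqrt (∑ i, x i ^ 2)

section AuxE
variable {E : Type*} [NormedAddCommGroup E] [NormedSpace ℝ E]

lemma contDiff_fderiv_apply {H : E → ℝ} (hH : ContDiff ℝ (⊤ : ℕ∞) H) (v : E) :
    ContDiff ℝ (⊤ : ℕ∞) (fun p => fderiv ℝ H p v) :=
  (hH.fderiv_right (by simp)).clm_apply contDiff_const

lemma fderiv_eq_zero_of_eqOn_zero {H : E → ℝ} {U : Set E} (hU : IsOpen U)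
    (h0 : ∀ p ∈ U, H p = 0) {p : E} (hp : p ∈ U) : fderiv ℝ H p = 0 := by
  have h : H =ᶠ[nhds p] (fun _ => (0:ℝ)) := Filter.eventuallyEq_of_mem (hU.mem_nhds hp) h0
  rw [h.fderiv_eq]; exact fderiv_const_apply 0

lemma fderiv_fderiv_symm {H : E → ℝ} (hH : ContDiff ℝ (⊤ : ℕ∞) H) (p v w : E) :
    fderiv ℝ (fun q => fderiv ℝ H q v) p w = fderiv ℝ (fun q => fderiv ℝ H q w) p v := by
  have hd : DifferentiableAt ℝ (fderiv ℝ H) p :=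
    ((hH.fderiv_right (m := (⊤ : ℕ∞)) (by simp)).differentiable (by simp)) p
  have h1 : ∀ u : E, fderiv ℝ (fun q => fderiv ℝ H q u) p
      = (fderiv ℝ (fderiv ℝ H) p).flip u := by
    intro u
    rw [fderiv_clm_apply hd (differentiableAt_const u)]
    simp
  rw [h1 v, h1 w]
  have hs := (hH.contDiffAt (x := p)).isSymmSndFDerivAt (by rw [minSmoothness_of_isRCLikeNormedField]; exact WithTop.coe_le_coe.2 le_top)
  simpa using (hs.eq w v)
end AuxE

lemma hasDerivAt_slice {H : ℝ × V3 → ℝ} (hH : ContDiff ℝ (⊤ : ℕ∞) H) (t : ℝ) (x : V3) :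
    HasDerivAt (fun s => H (s, x)) (fderiv ℝ H (t, x) (1, 0)) t := by
  have h := (hH.differentiable (by simp) (t, x)).hasFDerivAt
  have h2 : HasDerivAt (fun s : ℝ => (s, x)) ((1 : ℝ), (0 : V3)) t :=
    (hasDerivAt_id t).prodMk (hasDerivAt_const t x)
  exact h.comp_hasDerivAt t h2

lemma pd_slice {H : ℝ × V3 → ℝ} (hH : ContDiff ℝ (⊤ : ℕ∞) H) (t : ℝ) (x : V3) (j : Fin 3) :
    pd j (fun y => H (t, y)) x = fderiv ℝ H (t, x) (0, Pi.single j 1) := by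
  have h := (hH.differentiable (by simp) (t, x)).hasFDerivAt
  have h2 : HasFDerivAt (fun y : V3 => (t, y)) (ContinuousLinearMap.inr ℝ ℝ V3) x :=
    hasFDerivAt_prodMk_right t x
  have h3 : HasFDerivAt (fun y => H (t, y))
      ((fderiv ℝ H (t, x)).comp (ContinuousLinearMap.inr ℝ ℝ V3)) x := h.comp x h2
  rw [pd, h3.fderiv]
  simp

lemma contDiff_slice_x {H : ℝ × V3 → ℝ} (hH : ContDiff ℝ (⊤ : ℕ∞) H) (t : ℝ) :
    ContDiff ℝ (⊤ : ℕ∞) (fun y => H (t, y)) :=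
  hH.comp (contDiff_prodMk_right t)

lemma ibp1 {f g : V3 → ℝ} (hf : ContDiff ℝ (⊤ : ℕ∞) f) (hg : ContDiff ℝ (⊤ : ℕ∞) g)
    (hgs : HasCompactSupport g) (j : Fin 3) :
    ∫ x, pd j f x * g x = -∫ x, f x * pd j g x := by
  have h := integral_mul_fderiv_eq_neg_fderiv_mul_of_integrable (μ := (volume : Measure V3))
    (f := f) (g := g) (v := Pi.single j 1)
    ?_ ?_ ?_ (fun x _ => hf.differentiable (by simp) x) (fun x _ => hg.differentiable (by simp) x)
  · simp only [pd]
    rw [h, neg_neg]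
  · exact (Continuous.mul (contDiff_fderiv_apply hf _).continuous hg.continuous).integrable_of_hasCompactSupport (hgs.mul_left)
  · exact (Continuous.mul hf.continuous (contDiff_fderiv_apply hg _).continuous).integrable_of_hasCompactSupport
      ((hgs.fderiv ℝ).comp_left (g := fun L : V3 →L[ℝ] ℝ => L (Pi.single j 1)) (by simp)).mul_left
  · exact (Continuous.mul hf.continuous hg.continuous).integrable_of_hasCompactSupport hgs.mul_left

/-- helper defs for integration by parts -/
def As (mu : V3 → ℝ) (vs : V3 → V3) (i j : Fin 3) (y : V3) : ℝ :=
  mu y * (pd j (fun z => vs z i) y + pd i (fun z => vs z j) y)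

def Ld (lam : V3 → ℝ) (vs : V3 → V3) (y : V3) : ℝ := lam y * vdiv vs y

lemma contDiff_pd {f : V3 → ℝ} (hf : ContDiff ℝ (⊤ : ℕ∞) f) (j : Fin 3) :
    ContDiff ℝ (⊤ : ℕ∞) (pd j f) := contDiff_fderiv_apply hf _

lemma contDiff_vdiv {v : V3 → V3} (hv : ∀ i, ContDiff ℝ (⊤ : ℕ∞) fun x => v x i) :
    ContDiff ℝ (⊤ : ℕ∞) (vdiv v) :=
  ContDiff.sum fun i _ => contDiff_pd (hv i) i

lemma hcs_pd {g : V3 → ℝ} (hgs : HasCompactSupport g) (j : Fin 3) :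
    HasCompactSupport (pd j g) :=
  (hgs.fderiv ℝ).comp_left (g := fun L : V3 →L[ℝ] ℝ => L (Pi.single j 1)) (by simp)

lemma integrable_nice {f g : V3 → ℝ} (hf : Continuous f) (hg : Continuous g)
    (hgs : HasCompactSupport g) : Integrable (fun x => f x * g x) :=
  (hf.mul hg).integrable_of_hasCompactSupport hgs.mul_left

lemma sum_split (f g : Fin 3 → Fin 3 → ℝ) :
    ∑ i, ∑ j, (f i j + g i j) = (∑ i, ∑ j, f i j) + ∑ i, ∑ j, g i j := by
  rw [← Finset.sum_add_distrib]
  exact Finset.sum_congr rfl fun i _ => Finset.sum_add_distrib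

lemma symm_sum_identity (m : ℝ) (a b : Fin 3 → Fin 3 → ℝ) :
    2 * m * ∑ i, ∑ j, ((1:ℝ)/2 * (a i j + a j i)) * ((1:ℝ)/2 * (b i j + b j i))
      = ∑ i, ∑ j, m * ((a i j + a j i) * b i j) := by
  have hswap : (∑ i, ∑ j, m/2 * ((a i j + a j i) * b j i))
      = ∑ i, ∑ j, m/2 * ((a i j + a j i) * b i j) := by
    rw [Finset.sum_comm]
    exact Finset.sum_congr rfl fun i _ => Finset.sum_congr rfl fun j _ => by ring
  calc 2 * m * ∑ i, ∑ j, ((1:ℝ)/2 * (a i j + a j i)) * ((1:ℝ)/2 * (b i j + b j i))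
      = ∑ i, ∑ j, (m/2 * ((a i j + a j i) * b i j) + m/2 * ((a i j + a j i) * b j i)) := by
        rw [Finset.mul_sum]
        refine Finset.sum_congr rfl fun i _ => ?_
        rw [Finset.mul_sum]
        exact Finset.sum_congr rfl fun j _ => by ring
    _ = (∑ i, ∑ j, m/2 * ((a i j + a j i) * b i j))
          + ∑ i, ∑ j, m/2 * ((a i j + a j i) * b j i) := sum_split _ _
    _ = ∑ i, ∑ j, m * ((a i j + a j i) * b i j) := by
        rw [hswap, ← sum_split]
        exact Finset.sum_congr rfl fun i _ => Finset.sum_congr rfl fun j _ => by ring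

lemma ibp_core (mu lam q r : V3 → ℝ) (hmu : ContDiff ℝ (⊤ : ℕ∞) mu) (hlam : ContDiff ℝ (⊤ : ℕ∞) lam)
    (hq : ContDiff ℝ (⊤ : ℕ∞) q) (hr : ContDiff ℝ (⊤ : ℕ∞) r) (vs vf ws wf : V3 → V3)
    (hvs : ∀ i, ContDiff ℝ (⊤ : ℕ∞) fun x => vs x i) (hvf : ∀ i, ContDiff ℝ (⊤ : ℕ∞) fun x => vf x i)
    (hws : ∀ i, ContDiff ℝ (⊤ : ℕ∞) fun x => ws x i) (hwf : ∀ i, ContDiff ℝ (⊤ : ℕ∞) fun x => wf x i)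
    (hwss : ∀ i, HasCompactSupport fun x => ws x i)
    (hwfs : ∀ i, HasCompactSupport fun x => wf x i) :
    ∫ x, (dot3 (PD1 mu lam q vs vf x) (ws x) + dot3 (PD2 q r vs vf x) (wf x))
      = ∫ x, Bint lam mu q r vs vf ws wf x := by
  have hA : ∀ i j, ContDiff ℝ (⊤ : ℕ∞) (As mu vs i j) := fun i j =>
    hmu.mul ((contDiff_pd (hvs i) j).add (contDiff_pd (hvs j) i))
  have hL : ContDiff ℝ (⊤ : ℕ∞) (Ld lam vs) := hlam.mul (contDiff_vdiv hvs)
  have hQf : ContDiff ℝ (⊤ : ℕ∞) (Ld q vf) := hq.mul (contDiff_vdiv hvf)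
  have hQs : ContDiff ℝ (⊤ : ℕ∞) (Ld q vs) := hq.mul (contDiff_vdiv hvs)
  have hR : ContDiff ℝ (⊤ : ℕ∞) (Ld r vf) := hr.mul (contDiff_vdiv hvf)
  -- step A : pointwise expansion of the left integrand
  have stepA : ∀ x, dot3 (PD1 mu lam q vs vf x) (ws x) + dot3 (PD2 q r vs vf x) (wf x)
      = ∑ i, ((∑ j, -(pd j (As mu vs i j) x * ws x i))
          + (-(pd i (Ld lam vs) x * ws x i) + -(pd i (Ld q vf) x * ws x i)
          + (-(pd i (Ld q vs) x * wf x i) + -(pd i (Ld r vf) x * wf x i)))) := by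
    intro x
    have hSA : ∀ i j : Fin 3,
        (fun y => (mu y • (jac vs y + (jac vs y)ᵀ)) i j) = As mu vs i j := by
      intro i j; funext y
      simp [jac, As, Matrix.smul_apply, Matrix.add_apply, Matrix.transpose_apply]
    rw [dot3, dot3, ← Finset.sum_add_distrib]
    refine Finset.sum_congr rfl fun i _ => ?_
    have h1 : PD1 mu lam q vs vf x i
        = -(∑ j, pd j (As mu vs i j) x) - pd i (Ld lam vs) x - pd i (Ld q vf) x := by
      simp only [PD1, elast, mdiv, grad, Pi.sub_apply, Pi.neg_apply, Pi.add_apply]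
      simp_rw [hSA]
      have e1 : pd i (Ld lam vs) x = pd i (fun y => lam y * vdiv vs y) x := rfl
      have e2 : pd i (Ld q vf) x = pd i (fun y => q y * vdiv vf y) x := rfl
      rw [e1, e2]
      ring
    have h2 : PD2 q r vs vf x i = -(pd i (Ld q vs) x) - pd i (Ld r vf) x := by
      simp only [PD2, grad, Pi.sub_apply, Pi.neg_apply]
      have e1 : pd i (Ld q vs) x = pd i (fun y => q y * vdiv vs y) x := rfl
      have e2 : pd i (Ld r vf) x = pd i (fun y => r y * vdiv vf y) x := rfl
      rw [e1, e2]
    rw [h1, h2]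
    rw [Finset.sum_neg_distrib, ← Finset.sum_mul]
    ring
  have hwsc : ∀ i, ContDiff ℝ (⊤ : ℕ∞) fun x => ws x i := hws
  have ibp' : ∀ (f : V3 → ℝ), ContDiff ℝ (⊤ : ℕ∞) f → ∀ (g : V3 → ℝ), ContDiff ℝ (⊤ : ℕ∞) g →
      HasCompactSupport g → ∀ j, ∫ x, -(pd j f x * g x) = ∫ x, f x * pd j g x := by
    intro f hf g hg hgs j
    rw [integral_neg, ibp1 hf hg hgs j, neg_neg]
  -- integrable pieces (left side)
  have I1 : ∀ i j, Integrable (fun x => -(pd j (As mu vs i j) x * ws x i)) := fun i j =>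
    (integrable_nice (contDiff_pd (hA i j) j).continuous (hws i).continuous (hwss i)).neg
  have I2 : ∀ i : Fin 3, Integrable (fun x => -(pd i (Ld lam vs) x * ws x i)) := fun i =>
    (integrable_nice (contDiff_pd hL i).continuous (hws i).continuous (hwss i)).neg
  have I3 : ∀ i : Fin 3, Integrable (fun x => -(pd i (Ld q vf) x * ws x i)) := fun i =>
    (integrable_nice (contDiff_pd hQf i).continuous (hws i).continuous (hwss i)).neg
  have I4 : ∀ i : Fin 3, Integrable (fun x => -(pd i (Ld q vs) x * wf x i)) := fun i =>
    (integrable_nice (contDiff_pd hQs i).continuous (hwf i).continuous (hwfs i)).neg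
  have I5 : ∀ i : Fin 3, Integrable (fun x => -(pd i (Ld r vf) x * wf x i)) := fun i =>
    (integrable_nice (contDiff_pd hR i).continuous (hwf i).continuous (hwfs i)).neg
  -- integrable pieces (right side, after ibp)
  have J1 : ∀ i j, Integrable (fun x => As mu vs i j x * pd j (fun y => ws y i) x) := fun i j =>
    integrable_nice (hA i j).continuous (contDiff_pd (hws i) j).continuous (hcs_pd (hwss i) j)
  have J2 : ∀ i : Fin 3, Integrable (fun x => Ld lam vs x * pd i (fun y => ws y i) x) := fun i =>
    integrable_nice hL.continuous (contDiff_pd (hws i) i).continuous (hcs_pd (hwss i) i)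
  have J3 : ∀ i : Fin 3, Integrable (fun x => Ld q vf x * pd i (fun y => ws y i) x) := fun i =>
    integrable_nice hQf.continuous (contDiff_pd (hws i) i).continuous (hcs_pd (hwss i) i)
  have J4 : ∀ i : Fin 3, Integrable (fun x => Ld q vs x * pd i (fun y => wf y i) x) := fun i =>
    integrable_nice hQs.continuous (contDiff_pd (hwf i) i).continuous (hcs_pd (hwfs i) i)
  have J5 : ∀ i : Fin 3, Integrable (fun x => Ld r vf x * pd i (fun y => wf y i) x) := fun i =>
    integrable_nice hR.continuous (contDiff_pd (hwf i) i).continuous (hcs_pd (hwfs i) i)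
  have IT1 : Integrable (fun x => ∑ i, ∑ j, -(pd j (As mu vs i j) x * ws x i)) :=
    integrable_finset_sum _ fun i _ => integrable_finset_sum _ fun j _ => I1 i j
  have IT2 : Integrable (fun x => ∑ i, -(pd i (Ld lam vs) x * ws x i)) :=
    integrable_finset_sum _ fun i _ => I2 i
  have IT3 : Integrable (fun x => ∑ i, -(pd i (Ld q vf) x * ws x i)) :=
    integrable_finset_sum _ fun i _ => I3 i
  have IT4 : Integrable (fun x => ∑ i, -(pd i (Ld q vs) x * wf x i)) :=
    integrable_finset_sum _ fun i _ => I4 i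
  have IT5 : Integrable (fun x => ∑ i, -(pd i (Ld r vf) x * wf x i)) :=
    integrable_finset_sum _ fun i _ => I5 i
  have IT23 : Integrable (fun x => (∑ i, -(pd i (Ld lam vs) x * ws x i))
      + ∑ i, -(pd i (Ld q vf) x * ws x i)) := IT2.add IT3
  have IT45 : Integrable (fun x => (∑ i, -(pd i (Ld q vs) x * wf x i))
      + ∑ i, -(pd i (Ld r vf) x * wf x i)) := IT4.add IT5
  have IT2345 : Integrable (fun x => ((∑ i, -(pd i (Ld lam vs) x * ws x i))
      + ∑ i, -(pd i (Ld q vf) x * ws x i)) + (((∑ i, -(pd i (Ld q vs) x * wf x i))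
      + ∑ i, -(pd i (Ld r vf) x * wf x i)))) := IT23.add IT45
  have JT1 : Integrable (fun x => ∑ i, ∑ j, As mu vs i j x * pd j (fun y => ws y i) x) :=
    integrable_finset_sum _ fun i _ => integrable_finset_sum _ fun j _ => J1 i j
  have JT2 : Integrable (fun x => ∑ i, Ld lam vs x * pd i (fun y => ws y i) x) :=
    integrable_finset_sum _ fun i _ => J2 i
  have JT3 : Integrable (fun x => ∑ i, Ld q vf x * pd i (fun y => ws y i) x) :=
    integrable_finset_sum _ fun i _ => J3 i
  have JT4 : Integrable (fun x => ∑ i, Ld q vs x * pd i (fun y => wf y i) x) :=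
    integrable_finset_sum _ fun i _ => J4 i
  have JT5 : Integrable (fun x => ∑ i, Ld r vf x * pd i (fun y => wf y i) x) :=
    integrable_finset_sum _ fun i _ => J5 i
  have JT23 : Integrable (fun x => (∑ i, Ld lam vs x * pd i (fun y => ws y i) x)
      + ∑ i, Ld q vf x * pd i (fun y => ws y i) x) := JT2.add JT3
  have JT45 : Integrable (fun x => (∑ i, Ld q vs x * pd i (fun y => wf y i) x)
      + ∑ i, Ld r vf x * pd i (fun y => wf y i) x) := JT4.add JT5
  have JT2345 : Integrable (fun x => ((∑ i, Ld lam vs x * pd i (fun y => ws y i) x)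
      + ∑ i, Ld q vf x * pd i (fun y => ws y i) x) + ((∑ i, Ld q vs x * pd i (fun y => wf y i) x)
      + ∑ i, Ld r vf x * pd i (fun y => wf y i) x)) := JT23.add JT45
  calc ∫ x, (dot3 (PD1 mu lam q vs vf x) (ws x) + dot3 (PD2 q r vs vf x) (wf x))
      = ∫ x, ((∑ i, ∑ j, -(pd j (As mu vs i j) x * ws x i))
          + (((∑ i, -(pd i (Ld lam vs) x * ws x i)) + ∑ i, -(pd i (Ld q vf) x * ws x i))
          + (((∑ i, -(pd i (Ld q vs) x * wf x i)) + ∑ i, -(pd i (Ld r vf) x * wf x i))))) := by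
        refine congrArg _ (funext fun x => ?_)
        rw [stepA x, Finset.sum_add_distrib, Finset.sum_add_distrib, Finset.sum_add_distrib,
          Finset.sum_add_distrib]
    _ = (∑ i, ∑ j, ∫ x, -(pd j (As mu vs i j) x * ws x i))
          + (((∑ i, ∫ x, -(pd i (Ld lam vs) x * ws x i))
            + ∑ i, ∫ x, -(pd i (Ld q vf) x * ws x i))
          + (((∑ i, ∫ x, -(pd i (Ld q vs) x * wf x i))
            + ∑ i, ∫ x, -(pd i (Ld r vf) x * wf x i)))) := by
        rw [integral_add IT1 IT2345, integral_add IT23 IT45, integral_add IT2 IT3,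
          integral_add IT4 IT5, integral_finset_sum _ fun i _ => integrable_finset_sum _
            fun j _ => I1 i j]
        rw [integral_finset_sum _ fun i _ => I2 i, integral_finset_sum _ fun i _ => I3 i,
          integral_finset_sum _ fun i _ => I4 i, integral_finset_sum _ fun i _ => I5 i]
        refine congrArg₂ _ (Finset.sum_congr rfl fun i _ => ?_) rfl
        exact integral_finset_sum _ fun j _ => I1 i j
    _ = (∑ i, ∑ j, ∫ x, As mu vs i j x * pd j (fun y => ws y i) x)
          + (((∑ i, ∫ x, Ld lam vs x * pd i (fun y => ws y i) x)
            + ∑ i, ∫ x, Ld q vf x * pd i (fun y => ws y i) x)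
          + (((∑ i, ∫ x, Ld q vs x * pd i (fun y => wf y i) x)
            + ∑ i, ∫ x, Ld r vf x * pd i (fun y => wf y i) x))) := by
        congr 1
        · exact Finset.sum_congr rfl fun i _ => Finset.sum_congr rfl fun j _ =>
            ibp' _ (hA i j) _ (hws i) (hwss i) j
        congr 1
        · exact congrArg₂ _ (Finset.sum_congr rfl fun i _ => ibp' _ hL _ (hws i) (hwss i) i)
            (Finset.sum_congr rfl fun i _ => ibp' _ hQf _ (hws i) (hwss i) i)
        · exact congrArg₂ _ (Finset.sum_congr rfl fun i _ => ibp' _ hQs _ (hwf i) (hwfs i) i)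
            (Finset.sum_congr rfl fun i _ => ibp' _ hR _ (hwf i) (hwfs i) i)
    _ = ∫ x, ((∑ i, ∑ j, As mu vs i j x * pd j (fun y => ws y i) x)
          + (((∑ i, Ld lam vs x * pd i (fun y => ws y i) x)
            + ∑ i, Ld q vf x * pd i (fun y => ws y i) x)
          + (((∑ i, Ld q vs x * pd i (fun y => wf y i) x)
            + ∑ i, Ld r vf x * pd i (fun y => wf y i) x)))) := by
        rw [integral_add JT1 JT2345, integral_add JT23 JT45, integral_add JT2 JT3,
          integral_add JT4 JT5, integral_finset_sum _ fun i _ => integrable_finset_sum _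
            fun j _ => J1 i j]
        rw [integral_finset_sum _ fun i _ => J2 i, integral_finset_sum _ fun i _ => J3 i,
          integral_finset_sum _ fun i _ => J4 i, integral_finset_sum _ fun i _ => J5 i]
        refine congrArg₂ _ (Finset.sum_congr rfl fun i _ => ?_) rfl
        exact (integral_finset_sum _ fun j _ => J1 i j).symm
    _ = ∫ x, Bint lam mu q r vs vf ws wf x := by
        refine congrArg _ (funext fun x => ?_)
        have key := symm_sum_identity (mu x) (fun i j => pd j (fun y => vs y i) x)
          (fun i j => pd j (fun y => ws y i) x)
        have hfrob : 2 * mu x * frob (eps vs x) (eps ws x)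
            = ∑ i, ∑ j, As mu vs i j x * pd j (fun y => ws y i) x := by
          have hfe : frob (eps vs x) (eps ws x)
              = ∑ i, ∑ j, ((1:ℝ)/2 * (pd j (fun y => vs y i) x + pd i (fun y => vs y j) x))
                * ((1:ℝ)/2 * (pd j (fun y => ws y i) x + pd i (fun y => ws y j) x)) := by
            simp [frob, Matrix.trace, Matrix.mul_apply, Matrix.diag, eps, jac,
              Matrix.transpose_apply, Matrix.add_apply, Matrix.smul_apply, smul_eq_mul]
            exact Finset.sum_congr rfl fun i _ => Finset.sum_congr rfl fun j _ => by ring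
          rw [hfe, key]
          exact Finset.sum_congr rfl fun i _ => Finset.sum_congr rfl fun j _ => by
            simp [As]; ring
        have hT2 : (∑ i, Ld lam vs x * pd i (fun y => ws y i) x)
            = lam x * vdiv vs x * vdiv ws x := by rw [← Finset.mul_sum]; rfl
        have hT3 : (∑ i, Ld q vf x * pd i (fun y => ws y i) x)
            = q x * vdiv vf x * vdiv ws x := by rw [← Finset.mul_sum]; rfl
        have hT4 : (∑ i, Ld q vs x * pd i (fun y => wf y i) x)
            = q x * vdiv vs x * vdiv wf x := by rw [← Finset.mul_sum]; rfl
        have hT5 : (∑ i, Ld r vf x * pd i (fun y => wf y i) x)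
            = r x * vdiv vf x * vdiv wf x := by rw [← Finset.mul_sum]; rfl
        rw [hT2, hT3, hT4, hT5, ← hfrob]
        simp only [Bint]
        ring

/-! ### Joint (time-space) function infrastructure -/

def Uc (u : ℝ → V3 → V3) (i : Fin 3) : ℝ × V3 → ℝ := fun p => u p.1 p.2 i
def Dt (H : ℝ × V3 → ℝ) : ℝ × V3 → ℝ := fun p => fderiv ℝ H p (1, 0)
def Dx (j : Fin 3) (H : ℝ × V3 → ℝ) : ℝ × V3 → ℝ := fun p => fderiv ℝ H p (0, Pi.single j 1)

lemma contDiff_Uc {u : ℝ → V3 → V3} (hu : ContDiff ℝ (⊤ : ℕ∞) fun p : ℝ × V3 => u p.1 p.2) (i : Fin 3) :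
    ContDiff ℝ (⊤ : ℕ∞) (Uc u i) := contDiff_pi.1 hu i

lemma contDiff_Dt {H : ℝ × V3 → ℝ} (hH : ContDiff ℝ (⊤ : ℕ∞) H) : ContDiff ℝ (⊤ : ℕ∞) (Dt H) :=
  contDiff_fderiv_apply hH _

lemma contDiff_Dx {H : ℝ × V3 → ℝ} (hH : ContDiff ℝ (⊤ : ℕ∞) H) (j : Fin 3) :
    ContDiff ℝ (⊤ : ℕ∞) (Dx j H) := contDiff_fderiv_apply hH _

lemma Dt_slice {H : ℝ × V3 → ℝ} (hH : ContDiff ℝ (⊤ : ℕ∞) H) (t : ℝ) (x : V3) :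
    HasDerivAt (fun s => H (s, x)) (Dt H (t, x)) t := hasDerivAt_slice hH t x

lemma Dx_slice {H : ℝ × V3 → ℝ} (hH : ContDiff ℝ (⊤ : ℕ∞) H) (t : ℝ) (x : V3) (j : Fin 3) :
    pd j (fun y => H (t, y)) x = Dx j H (t, x) := pd_slice hH t x j

lemma Dt_Dx_comm {H : ℝ × V3 → ℝ} (hH : ContDiff ℝ (⊤ : ℕ∞) H) (j : Fin 3) (p : ℝ × V3) :
    Dt (Dx j H) p = Dx j (Dt H) p := fderiv_fderiv_symm hH p (0, Pi.single j 1) (1, 0)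

lemma Dt_zero_on {H : ℝ × V3 → ℝ} {U : Set (ℝ × V3)} (hU : IsOpen U)
    (h0 : ∀ p ∈ U, H p = 0) {p : ℝ × V3} (hp : p ∈ U) : Dt H p = 0 := by
  rw [Dt, fderiv_eq_zero_of_eqOn_zero hU h0 hp]; rfl

lemma Dx_zero_on {H : ℝ × V3 → ℝ} {U : Set (ℝ × V3)} (hU : IsOpen U)
    (h0 : ∀ p ∈ U, H p = 0) {p : ℝ × V3} (hp : p ∈ U) : Dx j H p = 0 := by
  rw [Dx, fderiv_eq_zero_of_eqOn_zero hU h0 hp]; rfl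

/-- translations of the statement's time/space derivatives -/
lemma dtv_eq {u : ℝ → V3 → V3} (hu : ContDiff ℝ (⊤ : ℕ∞) fun p : ℝ × V3 => u p.1 p.2)
    (t : ℝ) (x : V3) (i : Fin 3) : dtv u t x i = Dt (Uc u i) (t, x) :=
  (Dt_slice (contDiff_Uc hu i) t x).deriv

lemma dt2v_eq {u : ℝ → V3 → V3} (hu : ContDiff ℝ (⊤ : ℕ∞) fun p : ℝ × V3 => u p.1 p.2)
    (t : ℝ) (x : V3) (i : Fin 3) : dt2v u t x i = Dt (Dt (Uc u i)) (t, x) := by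
  have h1 : (fun s => dtv u s x i) = fun s => Dt (Uc u i) (s, x) :=
    funext fun s => dtv_eq hu s x i
  show deriv (fun s => dtv u s x i) t = _
  rw [h1]
  exact (Dt_slice (contDiff_Dt (contDiff_Uc hu i)) t x).deriv

lemma pdc_eq {u : ℝ → V3 → V3} (hu : ContDiff ℝ (⊤ : ℕ∞) fun p : ℝ × V3 => u p.1 p.2)
    (t : ℝ) (x : V3) (i j : Fin 3) : pd j (fun y => u t y i) x = Dx j (Uc u i) (t, x) :=
  Dx_slice (contDiff_Uc hu i) t x j

lemma pd_dtv_eq {u : ℝ → V3 → V3} (hu : ContDiff ℝ (⊤ : ℕ∞) fun p : ℝ × V3 => u p.1 p.2)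
    (t : ℝ) (x : V3) (i j : Fin 3) :
    pd j (fun y => dtv u t y i) x = Dt (Dx j (Uc u i)) (t, x) := by
  have h1 : (fun y => dtv u t y i) = fun y => Dt (Uc u i) (t, y) :=
    funext fun y => dtv_eq hu t y i
  rw [h1, Dx_slice (contDiff_Dt (contDiff_Uc hu i)) t x j]
  exact (Dt_Dx_comm (contDiff_Uc hu i) j (t, x)).symm

/-! ### the energy density and its time derivative, as joint functions -/

def KE (u v : ℝ → V3 → V3) : ℝ × V3 → ℝ := fun p => ∑ i, Dt (Uc u i) p * Dt (Uc v i) p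
def DIV (u : ℝ → V3 → V3) : ℝ × V3 → ℝ := fun p => ∑ j, Dx j (Uc u j) p
def EPS (u : ℝ → V3 → V3) (i j : Fin 3) : ℝ × V3 → ℝ :=
  fun p => (1:ℝ)/2 * (Dx j (Uc u i) p + Dx i (Uc u j) p)
def FR (u v : ℝ → V3 → V3) : ℝ × V3 → ℝ := fun p => ∑ i, ∑ j, EPS u i j p * EPS v i j p

def KE' (u v : ℝ → V3 → V3) : ℝ × V3 → ℝ := fun p =>
  ∑ i, (Dt (Dt (Uc u i)) p * Dt (Uc v i) p + Dt (Uc u i) p * Dt (Dt (Uc v i)) p)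
def DIV' (u : ℝ → V3 → V3) : ℝ × V3 → ℝ := fun p => ∑ j, Dt (Dx j (Uc u j)) p
def EPS' (u : ℝ → V3 → V3) (i j : Fin 3) : ℝ × V3 → ℝ :=
  fun p => (1:ℝ)/2 * (Dt (Dx j (Uc u i)) p + Dt (Dx i (Uc u j)) p)
def FR' (u v : ℝ → V3 → V3) : ℝ × V3 → ℝ := fun p =>
  ∑ i, ∑ j, (EPS' u i j p * EPS v i j p + EPS u i j p * EPS' v i j p)

def bigG (ρ11 ρ12 ρ22 lam mu q r : V3 → ℝ) (us uf : ℝ → V3 → V3) : ℝ × V3 → ℝ := fun p =>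
  ρ11 p.2 * KE us us p + 2 * ρ12 p.2 * KE us uf p + ρ22 p.2 * KE uf uf p
    + (lam p.2 * (DIV us p * DIV us p) + 2 * mu p.2 * FR us us p
      + r p.2 * (DIV uf p * DIV uf p) + q p.2 * (DIV uf p * DIV us p + DIV us p * DIV uf p))

def bigG' (ρ11 ρ12 ρ22 lam mu q r : V3 → ℝ) (us uf : ℝ → V3 → V3) : ℝ × V3 → ℝ := fun p =>
  ρ11 p.2 * KE' us us p + 2 * ρ12 p.2 * KE' us uf p + ρ22 p.2 * KE' uf uf p
    + (lam p.2 * (DIV' us p * DIV us p + DIV us p * DIV' us p) + 2 * mu p.2 * FR' us us p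
      + r p.2 * (DIV' uf p * DIV uf p + DIV uf p * DIV' uf p)
      + q p.2 * ((DIV' uf p * DIV us p + DIV uf p * DIV' us p)
        + (DIV' us p * DIV uf p + DIV us p * DIV' uf p)))

section JointSmooth
variable {u v : ℝ → V3 → V3} (hu : ContDiff ℝ (⊤ : ℕ∞) fun p : ℝ × V3 => u p.1 p.2)
  (hv : ContDiff ℝ (⊤ : ℕ∞) fun p : ℝ × V3 => v p.1 p.2)
include hu

include hv in
lemma contDiff_KE : ContDiff ℝ (⊤ : ℕ∞) (KE u v) :=
  ContDiff.sum fun i _ => (contDiff_Dt (contDiff_Uc hu i)).mul (contDiff_Dt (contDiff_Uc hv i))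

lemma contDiff_DIV : ContDiff ℝ (⊤ : ℕ∞) (DIV u) :=
  ContDiff.sum fun j _ => contDiff_Dx (contDiff_Uc hu j) j

lemma contDiff_EPS (i j : Fin 3) : ContDiff ℝ (⊤ : ℕ∞) (EPS u i j) :=
  (contDiff_const.mul ((contDiff_Dx (contDiff_Uc hu i) j).add (contDiff_Dx (contDiff_Uc hu j) i)))

include hv in
lemma contDiff_FR : ContDiff ℝ (⊤ : ℕ∞) (FR u v) :=
  ContDiff.sum fun i _ => ContDiff.sum fun j _ => (contDiff_EPS hu i j).mul (contDiff_EPS hv i j)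

include hv in
lemma contDiff_KE' : ContDiff ℝ (⊤ : ℕ∞) (KE' u v) :=
  ContDiff.sum fun i _ =>
    ((contDiff_Dt (contDiff_Dt (contDiff_Uc hu i))).mul (contDiff_Dt (contDiff_Uc hv i))).add
      ((contDiff_Dt (contDiff_Uc hu i)).mul (contDiff_Dt (contDiff_Dt (contDiff_Uc hv i))))

lemma contDiff_DIV' : ContDiff ℝ (⊤ : ℕ∞) (DIV' u) :=
  ContDiff.sum fun j _ => contDiff_Dt (contDiff_Dx (contDiff_Uc hu j) j)

lemma contDiff_EPS' (i j : Fin 3) : ContDiff ℝ (⊤ : ℕ∞) (EPS' u i j) :=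
  (contDiff_const.mul ((contDiff_Dt (contDiff_Dx (contDiff_Uc hu i) j)).add
    (contDiff_Dt (contDiff_Dx (contDiff_Uc hu j) i))))

include hv in
lemma contDiff_FR' : ContDiff ℝ (⊤ : ℕ∞) (FR' u v) :=
  ContDiff.sum fun i _ => ContDiff.sum fun j _ =>
    ((contDiff_EPS' hu i j).mul (contDiff_EPS hv i j)).add
      ((contDiff_EPS hu i j).mul (contDiff_EPS' hv i j))

include hv in
lemma hasDerivAt_KE (t : ℝ) (x : V3) :
    HasDerivAt (fun s => KE u v (s, x)) (KE' u v (t, x)) t :=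
  HasDerivAt.fun_sum fun i _ =>
    (Dt_slice (contDiff_Dt (contDiff_Uc hu i)) t x).mul (Dt_slice (contDiff_Dt (contDiff_Uc hv i)) t x)

lemma hasDerivAt_DIV (t : ℝ) (x : V3) :
    HasDerivAt (fun s => DIV u (s, x)) (DIV' u (t, x)) t :=
  HasDerivAt.fun_sum fun j _ => Dt_slice (contDiff_Dx (contDiff_Uc hu j) j) t x

lemma hasDerivAt_EPS (i j : Fin 3) (t : ℝ) (x : V3) :
    HasDerivAt (fun s => EPS u i j (s, x)) (EPS' u i j (t, x)) t :=
  ((Dt_slice (contDiff_Dx (contDiff_Uc hu i) j) t x).add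
    (Dt_slice (contDiff_Dx (contDiff_Uc hu j) i) t x)).const_mul ((1:ℝ)/2)

include hv in
lemma hasDerivAt_FR (t : ℝ) (x : V3) :
    HasDerivAt (fun s => FR u v (s, x)) (FR' u v (t, x)) t :=
  HasDerivAt.fun_sum fun i _ => HasDerivAt.fun_sum fun j _ =>
    (hasDerivAt_EPS hu i j t x).mul (hasDerivAt_EPS hv i j t x)

end JointSmooth

section BigG
variable {ρ11 ρ12 ρ22 lam mu q r : V3 → ℝ} {us uf : ℝ → V3 → V3}
  (h11 : ContDiff ℝ (⊤ : ℕ∞) ρ11) (h12 : ContDiff ℝ (⊤ : ℕ∞) ρ12) (h22 : ContDiff ℝ (⊤ : ℕ∞) ρ22)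
  (hlam : ContDiff ℝ (⊤ : ℕ∞) lam) (hmu : ContDiff ℝ (⊤ : ℕ∞) mu) (hq : ContDiff ℝ (⊤ : ℕ∞) q) (hr : ContDiff ℝ (⊤ : ℕ∞) r)
  (hus : ContDiff ℝ (⊤ : ℕ∞) fun p : ℝ × V3 => us p.1 p.2)
  (huf : ContDiff ℝ (⊤ : ℕ∞) fun p : ℝ × V3 => uf p.1 p.2)
include hus huf

include h11 h12 h22 hlam hmu hq hr in
lemma contDiff_bigG : ContDiff ℝ (⊤ : ℕ∞) (bigG ρ11 ρ12 ρ22 lam mu q r us uf) :=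
  ((((h11.comp contDiff_snd).mul (contDiff_KE hus hus)).add
    (((contDiff_const.mul (h12.comp contDiff_snd))).mul (contDiff_KE hus huf))).add
    ((h22.comp contDiff_snd).mul (contDiff_KE huf huf))).add
    (((((hlam.comp contDiff_snd).mul ((contDiff_DIV hus).mul (contDiff_DIV hus))).add
      ((contDiff_const.mul (hmu.comp contDiff_snd)).mul (contDiff_FR hus hus))).add
      ((hr.comp contDiff_snd).mul ((contDiff_DIV huf).mul (contDiff_DIV huf)))).add
      ((hq.comp contDiff_snd).mul (((contDiff_DIV huf).mul (contDiff_DIV hus)).add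
        ((contDiff_DIV hus).mul (contDiff_DIV huf)))))

include h11 h12 h22 hlam hmu hq hr in
lemma contDiff_bigG' : ContDiff ℝ (⊤ : ℕ∞) (bigG' ρ11 ρ12 ρ22 lam mu q r us uf) :=
  ((((h11.comp contDiff_snd).mul (contDiff_KE' hus hus)).add
    (((contDiff_const.mul (h12.comp contDiff_snd))).mul (contDiff_KE' hus huf))).add
    ((h22.comp contDiff_snd).mul (contDiff_KE' huf huf))).add
    (((((hlam.comp contDiff_snd).mul (((contDiff_DIV' hus).mul (contDiff_DIV hus)).add
      ((contDiff_DIV hus).mul (contDiff_DIV' hus)))).add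
      ((contDiff_const.mul (hmu.comp contDiff_snd)).mul (contDiff_FR' hus hus))).add
      ((hr.comp contDiff_snd).mul (((contDiff_DIV' huf).mul (contDiff_DIV huf)).add
        ((contDiff_DIV huf).mul (contDiff_DIV' huf))))).add
      ((hq.comp contDiff_snd).mul ((((contDiff_DIV' huf).mul (contDiff_DIV hus)).add
        ((contDiff_DIV huf).mul (contDiff_DIV' hus))).add
        (((contDiff_DIV' hus).mul (contDiff_DIV huf)).add
          ((contDiff_DIV hus).mul (contDiff_DIV' huf))))))

lemma hasDerivAt_bigG (t : ℝ) (x : V3) :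
    HasDerivAt (fun s => bigG ρ11 ρ12 ρ22 lam mu q r us uf (s, x))
      (bigG' ρ11 ρ12 ρ22 lam mu q r us uf (t, x)) t := by
  have c1 := (hasDerivAt_KE hus hus t x).const_mul (ρ11 x)
  have c2 := (hasDerivAt_KE hus huf t x).const_mul (2 * ρ12 x)
  have c3 := (hasDerivAt_KE huf huf t x).const_mul (ρ22 x)
  have c4 := (((hasDerivAt_DIV hus t x).mul (hasDerivAt_DIV hus t x))).const_mul (lam x)
  have c5 := (hasDerivAt_FR hus hus t x).const_mul (2 * mu x)
  have c6 := (((hasDerivAt_DIV huf t x).mul (hasDerivAt_DIV huf t x))).const_mul (r x)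
  have c7 := ((((hasDerivAt_DIV huf t x).mul (hasDerivAt_DIV hus t x))).add
    (((hasDerivAt_DIV hus t x).mul (hasDerivAt_DIV huf t x)))).const_mul (q x)
  exact ((c1.add c2).add c3).add (((c4.add c5).add c6).add c7)
end BigG

lemma deriv_zero_on_Icc {f : ℝ → ℝ} {d a b t : ℝ} (hab : a < b) (ht : t ∈ Icc a b)
    (hf : HasDerivAt f d t) (h0 : ∀ s ∈ Icc a b, f s = 0) : d = 0 := by
  have hud : UniqueDiffWithinAt ℝ (Icc a b) t := (uniqueDiffOn_Icc hab) t ht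
  have h1 : HasDerivWithinAt f d (Icc a b) t := hf.hasDerivWithinAt
  have h2 : HasDerivWithinAt f 0 (Icc a b) t :=
    (hasDerivWithinAt_const t _ (0:ℝ)).congr (fun y hy => h0 y hy) (h0 t ht)
  rw [← h1.derivWithin hud, h2.derivWithin hud]

lemma atom_vanish {u : ℝ → V3 → V3} (hu : ContDiff ℝ (⊤ : ℕ∞) fun p : ℝ × V3 => u p.1 p.2)
    {K : Set V3} (hKc : IsClosed K) {T : ℝ} (hT : 0 < T)
    (hz : ∀ t ∈ Icc (0:ℝ) T, ∀ x, x ∉ K → u t x = 0) :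
    (∀ t ∈ Icc (0:ℝ) T, ∀ x, x ∉ K → ∀ i, Dt (Uc u i) (t, x) = 0
        ∧ ∀ j, Dx j (Uc u i) (t, x) = 0)
    ∧ (∀ t ∈ Ioo (0:ℝ) T, ∀ x, x ∉ K → ∀ i, Dt (Dt (Uc u i)) (t, x) = 0
        ∧ ∀ j, Dt (Dx j (Uc u i)) (t, x) = 0) := by
  have hopen : IsOpen ((Ioo (0:ℝ) T) ×ˢ (Kᶜ : Set V3)) := isOpen_Ioo.prod hKc.isOpen_compl
  have hU0 : ∀ i, ∀ p ∈ (Ioo (0:ℝ) T) ×ˢ (Kᶜ : Set V3), Uc u i p = 0 := by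
    intro i p hp
    simpa [Uc] using congrFun (hz p.1 (Ioo_subset_Icc_self hp.1) p.2 hp.2) i
  have hDt0 : ∀ i, ∀ p ∈ (Ioo (0:ℝ) T) ×ˢ (Kᶜ : Set V3), Dt (Uc u i) p = 0 :=
    fun i p hp => Dt_zero_on hopen (hU0 i) hp
  have hDx0 : ∀ i j, ∀ p ∈ (Ioo (0:ℝ) T) ×ˢ (Kᶜ : Set V3), Dx j (Uc u i) p = 0 :=
    fun i j p hp => Dx_zero_on hopen (hU0 i) hp
  constructor
  · intro t ht x hx i
    constructor
    · exact deriv_zero_on_Icc hT ht (Dt_slice (contDiff_Uc hu i) t x)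
        (fun s hs => by simpa [Uc] using congrFun (hz s hs x hx) i)
    · intro j
      rw [← Dx_slice (contDiff_Uc hu i) t x j, pd,
        fderiv_eq_zero_of_eqOn_zero hKc.isOpen_compl
          (fun y hy => by simpa [Uc] using congrFun (hz t ht y hy) i) hx]
      rfl
  · intro t ht x hx i
    have hp : ((t, x) : ℝ × V3) ∈ (Ioo (0:ℝ) T) ×ˢ (Kᶜ : Set V3) := ⟨ht, hx⟩
    exact ⟨Dt_zero_on hopen (fun p hp' => hDt0 i p hp') hp,
      fun j => Dt_zero_on hopen (fun p hp' => hDx0 i j p hp') hp⟩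

lemma PD1_apply (mu lam q : V3 → ℝ) (vs vf : V3 → V3) (x : V3) (i : Fin 3) :
    PD1 mu lam q vs vf x i
      = -(∑ j, pd j (As mu vs i j) x) - pd i (Ld lam vs) x - pd i (Ld q vf) x := by
  have hSA : ∀ i j : Fin 3,
      (fun y => (mu y • (jac vs y + (jac vs y)ᵀ)) i j) = As mu vs i j := by
    intro i j; funext y
    simp [jac, As, Matrix.smul_apply, Matrix.add_apply, Matrix.transpose_apply]
  simp only [PD1, elast, mdiv, grad, Pi.sub_apply, Pi.neg_apply, Pi.add_apply]
  simp_rw [hSA]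
  have e1 : pd i (Ld lam vs) x = pd i (fun y => lam y * vdiv vs y) x := rfl
  have e2 : pd i (Ld q vf) x = pd i (fun y => q y * vdiv vf y) x := rfl
  rw [e1, e2]
  ring

lemma PD2_apply (q r : V3 → ℝ) (vs vf : V3 → V3) (x : V3) (i : Fin 3) :
    PD2 q r vs vf x i = -(pd i (Ld q vs) x) - pd i (Ld r vf) x := by
  simp only [PD2, grad, Pi.sub_apply, Pi.neg_apply]
  have e1 : pd i (Ld q vs) x = pd i (fun y => q y * vdiv vs y) x := rfl
  have e2 : pd i (Ld r vf) x = pd i (fun y => r y * vdiv vf y) x := rfl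
  rw [e1, e2]

lemma contDiff_PD1 (mu lam q : V3 → ℝ) (hmu : ContDiff ℝ (⊤ : ℕ∞) mu) (hlam : ContDiff ℝ (⊤ : ℕ∞) lam)
    (hq : ContDiff ℝ (⊤ : ℕ∞) q) (vs vf : V3 → V3)
    (hvs : ∀ i, ContDiff ℝ (⊤ : ℕ∞) fun x => vs x i) (hvf : ∀ i, ContDiff ℝ (⊤ : ℕ∞) fun x => vf x i)
    (i : Fin 3) : ContDiff ℝ (⊤ : ℕ∞) (fun x => PD1 mu lam q vs vf x i) := by
  have h : (fun x => PD1 mu lam q vs vf x i)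
      = fun x => -(∑ j, pd j (As mu vs i j) x) - pd i (Ld lam vs) x - pd i (Ld q vf) x :=
    funext fun x => PD1_apply mu lam q vs vf x i
  rw [h]
  exact (((ContDiff.sum fun j _ => contDiff_pd
    (hmu.mul ((contDiff_pd (hvs i) j).add (contDiff_pd (hvs j) i))) j).neg).sub
    (contDiff_pd (hlam.mul (contDiff_vdiv hvs)) i)).sub
    (contDiff_pd (hq.mul (contDiff_vdiv hvf)) i)

lemma contDiff_PD2 (q r : V3 → ℝ) (hq : ContDiff ℝ (⊤ : ℕ∞) q) (hr : ContDiff ℝ (⊤ : ℕ∞) r) (vs vf : V3 → V3)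
    (hvs : ∀ i, ContDiff ℝ (⊤ : ℕ∞) fun x => vs x i) (hvf : ∀ i, ContDiff ℝ (⊤ : ℕ∞) fun x => vf x i)
    (i : Fin 3) : ContDiff ℝ (⊤ : ℕ∞) (fun x => PD2 q r vs vf x i) := by
  have h : (fun x => PD2 q r vs vf x i)
      = fun x => -(pd i (Ld q vs) x) - pd i (Ld r vf) x :=
    funext fun x => PD2_apply q r vs vf x i
  rw [h]
  exact ((contDiff_pd (hq.mul (contDiff_vdiv hvs)) i).neg).sub
    (contDiff_pd (hr.mul (contDiff_vdiv hvf)) i)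

lemma frob_eq (A B : Matrix (Fin 3) (Fin 3) ℝ) : frob A B = ∑ i, ∑ j, A i j * B i j := by
  simp [frob, Matrix.trace, Matrix.mul_apply, Matrix.diag, Matrix.transpose_apply]

section Trans
variable {u v : ℝ → V3 → V3} (hu : ContDiff ℝ (⊤ : ℕ∞) fun p : ℝ × V3 => u p.1 p.2)
  (hv : ContDiff ℝ (⊤ : ℕ∞) fun p : ℝ × V3 => v p.1 p.2)
include hu

lemma vdiv_slice (t : ℝ) (x : V3) : vdiv (u t) x = DIV u (t, x) := by
  simp only [vdiv, DIV]
  exact Finset.sum_congr rfl fun j _ => pdc_eq hu t x j j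

lemma vdiv_dtv (t : ℝ) (x : V3) : vdiv (dtv u t) x = DIV' u (t, x) := by
  simp only [vdiv, DIV']
  exact Finset.sum_congr rfl fun j _ => pd_dtv_eq hu t x j j

lemma eps_slice (t : ℝ) (x : V3) (i j : Fin 3) : eps (u t) x i j = EPS u i j (t, x) := by
  simp only [eps, jac, EPS, Matrix.smul_apply, Matrix.add_apply, Matrix.transpose_apply,
    smul_eq_mul]
  rw [pdc_eq hu t x i j, pdc_eq hu t x j i]

lemma eps_dtv (t : ℝ) (x : V3) (i j : Fin 3) : eps (dtv u t) x i j = EPS' u i j (t, x) := by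
  simp only [eps, jac, EPS', Matrix.smul_apply, Matrix.add_apply, Matrix.transpose_apply,
    smul_eq_mul]
  rw [pd_dtv_eq hu t x i j, pd_dtv_eq hu t x j i]

include hv in
lemma dot3_dtv (t : ℝ) (x : V3) : dot3 (dtv u t x) (dtv v t x) = KE u v (t, x) := by
  simp only [dot3, KE]
  exact Finset.sum_congr rfl fun i _ => by rw [dtv_eq hu t x i, dtv_eq hv t x i]

include hv in
lemma frob_slice (t : ℝ) (x : V3) :
    frob (eps (u t) x) (eps (v t) x) = FR u v (t, x) := by
  rw [frob_eq]
  simp only [FR]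
  exact Finset.sum_congr rfl fun i _ => Finset.sum_congr rfl fun j _ => by
    rw [eps_slice hu t x i j, eps_slice hv t x i j]

include hv in
lemma frob_mixed (t : ℝ) (x : V3) :
    frob (eps (u t) x) (eps (dtv v t) x) = ∑ i, ∑ j, EPS u i j (t, x) * EPS' v i j (t, x) := by
  rw [frob_eq]
  exact Finset.sum_congr rfl fun i _ => Finset.sum_congr rfl fun j _ => by
    rw [eps_slice hu t x i j, eps_dtv hv t x i j]

end Trans

section BintTrans
variable {lam mu q r : V3 → ℝ} {us uf : ℝ → V3 → V3}
  (hus : ContDiff ℝ (⊤ : ℕ∞) fun p : ℝ × V3 => us p.1 p.2)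
  (huf : ContDiff ℝ (⊤ : ℕ∞) fun p : ℝ × V3 => uf p.1 p.2)
include hus huf

lemma Bint_slice (t : ℝ) (x : V3) :
    Bint lam mu q r (us t) (uf t) (us t) (uf t) x
      = lam x * (DIV us (t, x) * DIV us (t, x)) + 2 * mu x * FR us us (t, x)
        + r x * (DIV uf (t, x) * DIV uf (t, x))
        + q x * (DIV uf (t, x) * DIV us (t, x) + DIV us (t, x) * DIV uf (t, x)) := by
  rw [Bint, vdiv_slice hus t x, vdiv_slice huf t x, frob_slice hus hus t x]
  ring_nf

lemma Bint_mixed (t : ℝ) (x : V3) :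
    Bint lam mu q r (us t) (uf t) (dtv us t) (dtv uf t) x
      = lam x * (DIV us (t, x) * DIV' us (t, x))
        + 2 * mu x * (∑ i, ∑ j, EPS us i j (t, x) * EPS' us i j (t, x))
        + r x * (DIV uf (t, x) * DIV' uf (t, x))
        + q x * (DIV uf (t, x) * DIV' us (t, x) + DIV us (t, x) * DIV' uf (t, x)) := by
  rw [Bint, vdiv_slice hus t x, vdiv_slice huf t x, vdiv_dtv hus t x, vdiv_dtv huf t x,
    frob_mixed hus hus t x]
  ring

end BintTrans

/-- Conservation of energy over `Ω` for compactly supported solutions of Biot's equations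
(without attenuation): `E_Ω(t, u) = E_Ω(0, u)` for all `t ∈ [0, T]`. -/
theorem energy_conservation_domain (c : ℝ) (hc : 0 < c)
    (ρ11 ρ12 ρ22 μ lam q r : V3 → ℝ)
    (h11 : GoodCoeff c ρ11) (h12 : GoodCoeff c ρ12) (h22 : GoodCoeff c ρ22)
    (hμ : GoodCoeff c μ) (hlam : GoodCoeff c lam) (hq : GoodCoeff c q) (hr : GoodCoeff c r)
    (hM : ∀ x, 0 < ρ11 x * ρ22 x - ρ12 x ^ 2)
    (hB : ∀ x, 0 < lam x * r x - q x ^ 2)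
    (T : ℝ) (hT : 0 < T) (Ω : Set V3) (hΩ : IsOpen Ω)
    (us uf : ℝ → V3 → V3)
    (hus : ContDiff ℝ (⊤ : ℕ∞) (fun p : ℝ × V3 => us p.1 p.2))
    (huf : ContDiff ℝ (⊤ : ℕ∞) (fun p : ℝ × V3 => uf p.1 p.2))
    (hsupp : ∃ K : Set V3, IsCompact K ∧ K ⊆ Ω ∧
      ∀ t ∈ Set.Icc (0 : ℝ) T, Function.support (us t) ⊆ K ∧ Function.support (uf t) ⊆ K)
    (heq : ∀ t ∈ Set.Ioo (0 : ℝ) T, ∀ x ∈ Ω,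
      ρ11 x • dt2v us t x + ρ12 x • dt2v uf t x + PD1 μ lam q (us t) (uf t) x = 0 ∧
      ρ12 x • dt2v us t x + ρ22 x • dt2v uf t x + PD2 q r (us t) (uf t) x = 0) :
    ∀ t ∈ Set.Icc (0 : ℝ) T,
      energy ρ11 ρ12 ρ22 lam μ q r Ω us uf t = energy ρ11 ρ12 ρ22 lam μ q r Ω us uf 0 := by
  obtain ⟨K, hK, hKΩ, hsuppK⟩ := hsupp
  have hKc : IsClosed K := hK.isClosed
  have h11s := h11.1; have h12s := h12.1; have h22s := h22.1
  have hμs := hμ.1; have hlams := hlam.1; have hqs := hq.1; have hrs := hr.1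
  have hzus : ∀ t ∈ Icc (0:ℝ) T, ∀ x, x ∉ K → us t x = 0 := by
    intro t ht x hx
    by_contra h
    exact hx ((hsuppK t ht).1 (Function.mem_support.2 h))
  have hzuf : ∀ t ∈ Icc (0:ℝ) T, ∀ x, x ∉ K → uf t x = 0 := by
    intro t ht x hx
    by_contra h
    exact hx ((hsuppK t ht).2 (Function.mem_support.2 h))
  obtain ⟨husV, husV'⟩ := atom_vanish hus hKc hT hzus
  obtain ⟨hufV, hufV'⟩ := atom_vanish huf hKc hT hzuf
  have hGsm : ContDiff ℝ (⊤ : ℕ∞) (bigG ρ11 ρ12 ρ22 lam μ q r us uf) :=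
    contDiff_bigG h11s h12s h22s hlams hμs hqs hrs hus huf
  have hG'sm : ContDiff ℝ (⊤ : ℕ∞) (bigG' ρ11 ρ12 ρ22 lam μ q r us uf) :=
    contDiff_bigG' h11s h12s h22s hlams hμs hqs hrs hus huf
  -- vanishing of the joint densities off K
  have hG0 : ∀ t ∈ Icc (0:ℝ) T, ∀ x, x ∉ K → bigG ρ11 ρ12 ρ22 lam μ q r us uf (t, x) = 0 := by
    intro t ht x hx
    have z1 : ∀ i, Dt (Uc us i) (t, x) = 0 := fun i => (husV t ht x hx i).1
    have z2 : ∀ i j, Dx j (Uc us i) (t, x) = 0 := fun i j => (husV t ht x hx i).2 j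
    have z3 : ∀ i, Dt (Uc uf i) (t, x) = 0 := fun i => (hufV t ht x hx i).1
    have z4 : ∀ i j, Dx j (Uc uf i) (t, x) = 0 := fun i j => (hufV t ht x hx i).2 j
    simp [bigG, KE, DIV, EPS, FR, z1, z2, z3, z4]
  have hG'0 : ∀ t ∈ Ioo (0:ℝ) T, ∀ x, x ∉ K →
      bigG' ρ11 ρ12 ρ22 lam μ q r us uf (t, x) = 0 := by
    intro t ht x hx
    have htI := Ioo_subset_Icc_self ht
    have z1 : ∀ i, Dt (Uc us i) (t, x) = 0 := fun i => (husV t htI x hx i).1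
    have z2 : ∀ i j, Dx j (Uc us i) (t, x) = 0 := fun i j => (husV t htI x hx i).2 j
    have z3 : ∀ i, Dt (Uc uf i) (t, x) = 0 := fun i => (hufV t htI x hx i).1
    have z4 : ∀ i j, Dx j (Uc uf i) (t, x) = 0 := fun i j => (hufV t htI x hx i).2 j
    have z5 : ∀ i, Dt (Dt (Uc us i)) (t, x) = 0 := fun i => (husV' t ht x hx i).1
    have z6 : ∀ i j, Dt (Dx j (Uc us i)) (t, x) = 0 := fun i j => (husV' t ht x hx i).2 j
    have z7 : ∀ i, Dt (Dt (Uc uf i)) (t, x) = 0 := fun i => (hufV' t ht x hx i).1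
    have z8 : ∀ i j, Dt (Dx j (Uc uf i)) (t, x) = 0 := fun i j => (hufV' t ht x hx i).2 j
    simp [bigG', KE', DIV', EPS', FR', DIV, EPS, z1, z2, z3, z4, z5, z6, z7, z8]
  -- energy is the integral of bigG
  have hE : ∀ t ∈ Icc (0:ℝ) T, energy ρ11 ρ12 ρ22 lam μ q r Ω us uf t
      = ∫ x, bigG ρ11 ρ12 ρ22 lam μ q r us uf (t, x) := by
    intro t ht
    have hdtvs0 : ∀ x, x ∉ K → dtv us t x = 0 := by
      intro x hx; funext i
      rw [dtv_eq hus t x i]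
      simpa using (husV t ht x hx i).1
    have hdtvf0 : ∀ x, x ∉ K → dtv uf t x = 0 := by
      intro x hx; funext i
      rw [dtv_eq huf t x i]
      simpa using (hufV t ht x hx i).1
    have hkin : ∀ x, ρ11 x * dot3 (dtv us t x) (dtv us t x)
        + 2 * ρ12 x * dot3 (dtv us t x) (dtv uf t x)
        + ρ22 x * dot3 (dtv uf t x) (dtv uf t x)
        = ρ11 x * KE us us (t, x) + 2 * ρ12 x * KE us uf (t, x)
          + ρ22 x * KE uf uf (t, x) := by
      intro x
      rw [dot3_dtv hus hus t x, dot3_dtv hus huf t x, dot3_dtv huf huf t x]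
    have hkin0 : ∀ x, x ∉ K → ρ11 x * dot3 (dtv us t x) (dtv us t x)
        + 2 * ρ12 x * dot3 (dtv us t x) (dtv uf t x)
        + ρ22 x * dot3 (dtv uf t x) (dtv uf t x) = 0 := by
      intro x hx
      rw [hdtvs0 x hx, hdtvf0 x hx]
      simp [dot3]
    have hbint0 : ∀ x, x ∉ K → Bint lam μ q r (us t) (uf t) (us t) (uf t) x = 0 := by
      intro x hx
      have z2 : ∀ i j, Dx j (Uc us i) (t, x) = 0 := fun i j => (husV t ht x hx i).2 j
      have z4 : ∀ i j, Dx j (Uc uf i) (t, x) = 0 := fun i j => (hufV t ht x hx i).2 j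
      rw [Bint_slice hus huf t x]
      simp [DIV, EPS, FR, z2, z4]
    have Ikin : Integrable (fun x => ρ11 x * dot3 (dtv us t x) (dtv us t x)
        + 2 * ρ12 x * dot3 (dtv us t x) (dtv uf t x)
        + ρ22 x * dot3 (dtv uf t x) (dtv uf t x)) := by
      have hrw : (fun x => ρ11 x * dot3 (dtv us t x) (dtv us t x)
          + 2 * ρ12 x * dot3 (dtv us t x) (dtv uf t x)
          + ρ22 x * dot3 (dtv uf t x) (dtv uf t x))
          = fun x => ρ11 x * KE us us (t, x) + 2 * ρ12 x * KE us uf (t, x)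
            + ρ22 x * KE uf uf (t, x) := funext hkin
      rw [hrw]
      refine Continuous.integrable_of_hasCompactSupport
        ?_ (HasCompactSupport.intro hK ?_)
      · exact ((h11s.continuous.mul (contDiff_slice_x (contDiff_KE hus hus) t).continuous).add
          ((continuous_const.mul h12s.continuous).mul
            (contDiff_slice_x (contDiff_KE hus huf) t).continuous)).add
          (h22s.continuous.mul (contDiff_slice_x (contDiff_KE huf huf) t).continuous)
      · intro x hx
        have z1 : ∀ i, Dt (Uc us i) (t, x) = 0 := fun i => (husV t ht x hx i).1
        have z3 : ∀ i, Dt (Uc uf i) (t, x) = 0 := fun i => (hufV t ht x hx i).1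
        simp [KE, z1, z3]
    have Ibint : Integrable (fun x => Bint lam μ q r (us t) (uf t) (us t) (uf t) x) := by
      have hrw : (fun x => Bint lam μ q r (us t) (uf t) (us t) (uf t) x)
          = fun x => lam x * (DIV us (t, x) * DIV us (t, x)) + 2 * μ x * FR us us (t, x)
            + r x * (DIV uf (t, x) * DIV uf (t, x))
            + q x * (DIV uf (t, x) * DIV us (t, x) + DIV us (t, x) * DIV uf (t, x)) :=
        funext (Bint_slice hus huf t)
      rw [hrw]
      refine Continuous.integrable_of_hasCompactSupport
        ?_ (HasCompactSupport.intro hK ?_)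
      · exact (((hlams.continuous.mul ((contDiff_slice_x (contDiff_DIV hus) t).continuous.mul
          (contDiff_slice_x (contDiff_DIV hus) t).continuous)).add
          ((continuous_const.mul hμs.continuous).mul
            (contDiff_slice_x (contDiff_FR hus hus) t).continuous)).add
          (hrs.continuous.mul ((contDiff_slice_x (contDiff_DIV huf) t).continuous.mul
            (contDiff_slice_x (contDiff_DIV huf) t).continuous))).add
          (hqs.continuous.mul (((contDiff_slice_x (contDiff_DIV huf) t).continuous.mul
            (contDiff_slice_x (contDiff_DIV hus) t).continuous).add
            ((contDiff_slice_x (contDiff_DIV hus) t).continuous.mul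
              (contDiff_slice_x (contDiff_DIV huf) t).continuous)))
      · intro x hx
        have z2 : ∀ i j, Dx j (Uc us i) (t, x) = 0 := fun i j => (husV t ht x hx i).2 j
        have z4 : ∀ i j, Dx j (Uc uf i) (t, x) = 0 := fun i j => (hufV t ht x hx i).2 j
        simp [DIV, EPS, FR, z2, z4]
    rw [energy, Bform]
    rw [setIntegral_eq_integral_of_forall_compl_eq_zero
      (fun x hx => hkin0 x (fun hxK => hx (hKΩ hxK))),
      setIntegral_eq_integral_of_forall_compl_eq_zero
      (fun x hx => hbint0 x (fun hxK => hx (hKΩ hxK))),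
      ← integral_add Ikin Ibint]
    refine congrArg _ (funext fun x => ?_)
    rw [hkin x, Bint_slice hus huf t x]
    simp only [bigG]
  -- derivative of the integral
  have hFd : ∀ t ∈ Ioo (0:ℝ) T,
      HasDerivAt (fun s => ∫ x, bigG ρ11 ρ12 ρ22 lam μ q r us uf (s, x))
        (∫ x, bigG' ρ11 ρ12 ρ22 lam μ q r us uf (t, x)) t := by
    intro t ht
    obtain ⟨ht0, htT⟩ := ht
    have hε : 0 < min t (T - t) := lt_min ht0 (sub_pos.2 htT)
    have hball : ∀ s ∈ Metric.ball t (min t (T - t)), s ∈ Ioo (0:ℝ) T := by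
      intro s hs
      rw [Metric.mem_ball, Real.dist_eq, abs_sub_lt_iff] at hs
      have h1 := min_le_left t (T - t)
      have h2 := min_le_right t (T - t)
      exact ⟨by linarith [hs.2], by linarith [hs.1]⟩
    obtain ⟨C, hC⟩ := (isCompact_Icc.prod hK).exists_bound_of_continuousOn
      (f := bigG' ρ11 ρ12 ρ22 lam μ q r us uf) (s := (Icc (t - min t (T - t)) (t + min t (T - t))) ×ˢ K)
      (hG'sm.continuous.continuousOn)
    refine (hasDerivAt_integral_of_dominated_loc_of_deriv_le (Metric.ball_mem_nhds t hε)
      (bound := K.indicator fun _ => C)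
      (Filter.Eventually.of_forall fun s =>
        (contDiff_slice_x hGsm s).continuous.aestronglyMeasurable)
      (((contDiff_slice_x hGsm t).continuous).integrable_of_hasCompactSupport
        (HasCompactSupport.intro hK fun x hx =>
          hG0 t (Ioo_subset_Icc_self ⟨ht0, htT⟩) x hx))
      ((contDiff_slice_x hG'sm t).continuous.aestronglyMeasurable)
      (Filter.Eventually.of_forall fun x => ?_)
      ((integrableOn_const hK.measure_lt_top.ne).integrable_indicator
        hK.measurableSet)
      (Filter.Eventually.of_forall fun x s _ =>
        hasDerivAt_bigG hus huf s x)).2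
    intro s hs
    by_cases hxK : x ∈ K
    · rw [Set.indicator_of_mem hxK]
      have hs' := hs
      rw [Metric.mem_ball, Real.dist_eq, abs_sub_lt_iff] at hs'
      exact hC (s, x) ⟨⟨by linarith [hs'.2], by linarith [hs'.1]⟩, hxK⟩
    · rw [Set.indicator_of_notMem hxK, hG'0 s (hball s hs) x hxK]
      simp
  -- the derivative integral vanishes
  have hzero : ∀ t ∈ Ioo (0:ℝ) T, ∫ x, bigG' ρ11 ρ12 ρ22 lam μ q r us uf (t, x) = 0 := by
    intro t ht
    have htI := Ioo_subset_Icc_self ht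
    have hvs : ∀ i, ContDiff ℝ (⊤ : ℕ∞) fun x => us t x i :=
      fun i => contDiff_slice_x (contDiff_Uc hus i) t
    have hvf : ∀ i, ContDiff ℝ (⊤ : ℕ∞) fun x => uf t x i :=
      fun i => contDiff_slice_x (contDiff_Uc huf i) t
    have hws : ∀ i, ContDiff ℝ (⊤ : ℕ∞) fun x => dtv us t x i := by
      intro i
      have hrw : (fun x => dtv us t x i) = fun x => Dt (Uc us i) (t, x) :=
        funext fun x => dtv_eq hus t x i
      rw [hrw]
      exact contDiff_slice_x (contDiff_Dt (contDiff_Uc hus i)) t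
    have hwf : ∀ i, ContDiff ℝ (⊤ : ℕ∞) fun x => dtv uf t x i := by
      intro i
      have hrw : (fun x => dtv uf t x i) = fun x => Dt (Uc uf i) (t, x) :=
        funext fun x => dtv_eq huf t x i
      rw [hrw]
      exact contDiff_slice_x (contDiff_Dt (contDiff_Uc huf i)) t
    have hwss : ∀ i, HasCompactSupport fun x => dtv us t x i := fun i =>
      HasCompactSupport.intro hK fun x hx => by
        show dtv us t x i = 0
        rw [dtv_eq hus t x i]
        exact (husV t htI x hx i).1
    have hwfs : ∀ i, HasCompactSupport fun x => dtv uf t x i := fun i =>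
      HasCompactSupport.intro hK fun x hx => by
        show dtv uf t x i = 0
        rw [dtv_eq huf t x i]
        exact (hufV t htI x hx i).1
    have hdtvs0 : ∀ x, x ∉ K → dtv us t x = 0 := by
      intro x hx; funext i
      rw [dtv_eq hus t x i]
      simpa using (husV t htI x hx i).1
    have hdtvf0 : ∀ x, x ∉ K → dtv uf t x = 0 := by
      intro x hx; funext i
      rw [dtv_eq huf t x i]
      simpa using (hufV t htI x hx i).1
    have hibp := ibp_core μ lam q r hμs hlams hqs hrs (us t) (uf t) (dtv us t) (dtv uf t)
      hvs hvf hws hwf hwss hwfs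
    have hPDE : ∀ x ∈ Ω, ∀ i,
        (ρ11 x * Dt (Dt (Uc us i)) (t, x) + ρ12 x * Dt (Dt (Uc uf i)) (t, x)
          = -(PD1 μ lam q (us t) (uf t) x i)) ∧
        (ρ12 x * Dt (Dt (Uc us i)) (t, x) + ρ22 x * Dt (Dt (Uc uf i)) (t, x)
          = -(PD2 q r (us t) (uf t) x i)) := by
      intro x hx i
      obtain ⟨e1, e2⟩ := heq t ht x hx
      have c1 := congrFun e1 i
      have c2 := congrFun e2 i
      simp only [Pi.add_apply, Pi.smul_apply, smul_eq_mul, Pi.zero_apply] at c1 c2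
      rw [dt2v_eq hus t x i, dt2v_eq huf t x i] at c1 c2
      exact ⟨by linarith, by linarith⟩
    have hpt : ∀ x, bigG' ρ11 ρ12 ρ22 lam μ q r us uf (t, x)
        = 2 * (Bint lam μ q r (us t) (uf t) (dtv us t) (dtv uf t) x
          - (dot3 (PD1 μ lam q (us t) (uf t) x) (dtv us t x)
            + dot3 (PD2 q r (us t) (uf t) x) (dtv uf t x))) := by
      intro x
      by_cases hx : x ∈ Ω
      · have hkin2 : ρ11 x * (∑ i, (Dt (Dt (Uc us i)) (t, x) * Dt (Uc us i) (t, x)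
              + Dt (Uc us i) (t, x) * Dt (Dt (Uc us i)) (t, x)))
            + 2 * ρ12 x * (∑ i, (Dt (Dt (Uc us i)) (t, x) * Dt (Uc uf i) (t, x)
              + Dt (Uc us i) (t, x) * Dt (Dt (Uc uf i)) (t, x)))
            + ρ22 x * (∑ i, (Dt (Dt (Uc uf i)) (t, x) * Dt (Uc uf i) (t, x)
              + Dt (Uc uf i) (t, x) * Dt (Dt (Uc uf i)) (t, x)))
            = -2 * ((∑ i, PD1 μ lam q (us t) (uf t) x i * Dt (Uc us i) (t, x))
              + ∑ i, PD2 q r (us t) (uf t) x i * Dt (Uc uf i) (t, x)) := by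
          rw [Finset.mul_sum, Finset.mul_sum, Finset.mul_sum, ← Finset.sum_add_distrib,
            ← Finset.sum_add_distrib, ← Finset.sum_add_distrib, Finset.mul_sum]
          refine Finset.sum_congr rfl fun i _ => ?_
          have h1 := (hPDE x hx i).1
          have h2 := (hPDE x hx i).2
          linear_combination (2 * Dt (Uc us i) (t, x)) * h1 + (2 * Dt (Uc uf i) (t, x)) * h2
        have hFR2 : (∑ i, ∑ j, (EPS' us i j (t, x) * EPS us i j (t, x)
              + EPS us i j (t, x) * EPS' us i j (t, x)))
            = 2 * ∑ i, ∑ j, EPS us i j (t, x) * EPS' us i j (t, x) := by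
          rw [Finset.mul_sum]
          refine Finset.sum_congr rfl fun i _ => ?_
          rw [Finset.mul_sum]
          exact Finset.sum_congr rfl fun j _ => by ring
        have hd1 : dot3 (PD1 μ lam q (us t) (uf t) x) (dtv us t x)
            = ∑ i, PD1 μ lam q (us t) (uf t) x i * Dt (Uc us i) (t, x) := by
          simp only [dot3]
          exact Finset.sum_congr rfl fun i _ => by rw [dtv_eq hus t x i]
        have hd2 : dot3 (PD2 q r (us t) (uf t) x) (dtv uf t x)
            = ∑ i, PD2 q r (us t) (uf t) x i * Dt (Uc uf i) (t, x) := by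
          simp only [dot3]
          exact Finset.sum_congr rfl fun i _ => by rw [dtv_eq huf t x i]
        rw [Bint_mixed hus huf t x, hd1, hd2]
        simp only [bigG', KE', FR']
        rw [hkin2, hFR2]
        ring
      · have hxK : x ∉ K := fun h => hx (hKΩ h)
        have hB0 : Bint lam μ q r (us t) (uf t) (dtv us t) (dtv uf t) x = 0 := by
          have z6 : ∀ i j, Dt (Dx j (Uc us i)) (t, x) = 0 :=
            fun i j => (husV' t ht x hxK i).2 j
          have z8 : ∀ i j, Dt (Dx j (Uc uf i)) (t, x) = 0 :=
            fun i j => (hufV' t ht x hxK i).2 j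
          rw [Bint_mixed hus huf t x]
          simp [DIV', EPS', z6, z8]
        rw [hG'0 t ht x hxK, hB0, hdtvs0 x hxK, hdtvf0 x hxK]
        simp [dot3]
    have IB : Integrable (fun x => Bint lam μ q r (us t) (uf t) (dtv us t) (dtv uf t) x) := by
      have hrw : (fun x => Bint lam μ q r (us t) (uf t) (dtv us t) (dtv uf t) x)
          = fun x => lam x * (DIV us (t, x) * DIV' us (t, x))
            + 2 * μ x * (∑ i, ∑ j, EPS us i j (t, x) * EPS' us i j (t, x))
            + r x * (DIV uf (t, x) * DIV' uf (t, x))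
            + q x * (DIV uf (t, x) * DIV' us (t, x) + DIV us (t, x) * DIV' uf (t, x)) :=
        funext (Bint_mixed hus huf t)
      rw [hrw]
      refine Continuous.integrable_of_hasCompactSupport ?_ (HasCompactSupport.intro hK ?_)
      · exact (((hlams.continuous.mul ((contDiff_slice_x (contDiff_DIV hus) t).continuous.mul
          (contDiff_slice_x (contDiff_DIV' hus) t).continuous)).add
          ((continuous_const.mul hμs.continuous).mul
            (contDiff_slice_x (ContDiff.sum fun i _ => ContDiff.sum fun j _ =>
              (contDiff_EPS hus i j).mul (contDiff_EPS' hus i j)) t).continuous)).add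
          (hrs.continuous.mul ((contDiff_slice_x (contDiff_DIV huf) t).continuous.mul
            (contDiff_slice_x (contDiff_DIV' huf) t).continuous))).add
          (hqs.continuous.mul (((contDiff_slice_x (contDiff_DIV huf) t).continuous.mul
            (contDiff_slice_x (contDiff_DIV' hus) t).continuous).add
            ((contDiff_slice_x (contDiff_DIV hus) t).continuous.mul
              (contDiff_slice_x (contDiff_DIV' huf) t).continuous)))
      · intro x hx
        have z6 : ∀ i j, Dt (Dx j (Uc us i)) (t, x) = 0 :=
          fun i j => (husV' t ht x hx i).2 j
        have z8 : ∀ i j, Dt (Dx j (Uc uf i)) (t, x) = 0 :=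
          fun i j => (hufV' t ht x hx i).2 j
        simp [DIV', EPS', z6, z8]
    have ID : Integrable (fun x => dot3 (PD1 μ lam q (us t) (uf t) x) (dtv us t x)
        + dot3 (PD2 q r (us t) (uf t) x) (dtv uf t x)) := by
      refine Continuous.integrable_of_hasCompactSupport ?_ (HasCompactSupport.intro hK ?_)
      · have c1 : Continuous fun x => dot3 (PD1 μ lam q (us t) (uf t) x) (dtv us t x) := by
          simp only [dot3]
          exact continuous_finset_sum _ fun i _ =>
            (contDiff_PD1 μ lam q hμs hlams hqs (us t) (uf t) hvs hvf i).continuous.mul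
              (hws i).continuous
        have c2 : Continuous fun x => dot3 (PD2 q r (us t) (uf t) x) (dtv uf t x) := by
          simp only [dot3]
          exact continuous_finset_sum _ fun i _ =>
            (contDiff_PD2 q r hqs hrs (us t) (uf t) hvs hvf i).continuous.mul
              (hwf i).continuous
        exact c1.add c2
      · intro x hx
        show dot3 (PD1 μ lam q (us t) (uf t) x) (dtv us t x)
          + dot3 (PD2 q r (us t) (uf t) x) (dtv uf t x) = 0
        rw [hdtvs0 x hx, hdtvf0 x hx]
        simp [dot3]
    calc ∫ x, bigG' ρ11 ρ12 ρ22 lam μ q r us uf (t, x)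
        = ∫ x, 2 * (Bint lam μ q r (us t) (uf t) (dtv us t) (dtv uf t) x
          - (dot3 (PD1 μ lam q (us t) (uf t) x) (dtv us t x)
            + dot3 (PD2 q r (us t) (uf t) x) (dtv uf t x))) := congrArg _ (funext hpt)
      _ = 2 * ((∫ x, Bint lam μ q r (us t) (uf t) (dtv us t) (dtv uf t) x)
          - ∫ x, (dot3 (PD1 μ lam q (us t) (uf t) x) (dtv us t x)
            + dot3 (PD2 q r (us t) (uf t) x) (dtv uf t x))) := by
          rw [integral_const_mul, integral_sub IB ID]
      _ = 0 := by rw [hibp]; ring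
  -- conclusion
  have hconst : ∀ a ∈ Ioo (0:ℝ) T, ∀ b ∈ Ioo (0:ℝ) T, a ≤ b →
      (∫ x, bigG ρ11 ρ12 ρ22 lam μ q r us uf (a, x))
        = ∫ x, bigG ρ11 ρ12 ρ22 lam μ q r us uf (b, x) := by
    intro a ha b hb hab
    have hsub : Icc a b ⊆ Ioo (0:ℝ) T := Icc_subset_Ioo ha.1 hb.2
    have hcont : ContinuousOn (fun s => ∫ x, bigG ρ11 ρ12 ρ22 lam μ q r us uf (s, x))
        (Icc a b) := fun s hs => ((hFd s (hsub hs)).continuousAt).continuousWithinAt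
    have hder : ∀ s ∈ Ico a b,
        HasDerivWithinAt (fun s => ∫ x, bigG ρ11 ρ12 ρ22 lam μ q r us uf (s, x))
          0 (Ici s) s := by
      intro s hs
      have h := hFd s (hsub (Ico_subset_Icc_self hs))
      rw [hzero s (hsub (Ico_subset_Icc_self hs))] at h
      exact h.hasDerivWithinAt
    exact (constant_of_has_deriv_right_zero hcont hder b (right_mem_Icc.2 hab)).symm
  have ht₀ : T/2 ∈ Ioo (0:ℝ) T := ⟨by linarith, by linarith⟩
  have hIooconst : ∀ t ∈ Ioo (0:ℝ) T,
      (∫ x, bigG ρ11 ρ12 ρ22 lam μ q r us uf (t, x))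
        = ∫ x, bigG ρ11 ρ12 ρ22 lam μ q r us uf (T/2, x) := by
    intro t ht
    rcases le_total t (T/2) with h | h
    · exact hconst t ht (T/2) ht₀ h
    · exact (hconst (T/2) ht₀ t ht h).symm
  obtain ⟨C, hC⟩ := (isCompact_Icc.prod hK).exists_bound_of_continuousOn
    (f := bigG ρ11 ρ12 ρ22 lam μ q r us uf) (s := (Icc (0:ℝ) T) ×ˢ K)
    (hGsm.continuous.continuousOn)
  have hlimit : ∀ t0 ∈ Icc (0:ℝ) T,
      Tendsto (fun s => ∫ x, bigG ρ11 ρ12 ρ22 lam μ q r us uf (s, x)) (nhdsWithin t0 (Ioo (0:ℝ) T))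
        (nhds (∫ x, bigG ρ11 ρ12 ρ22 lam μ q r us uf (t0, x))) := by
    intro t0 ht0
    refine tendsto_integral_filter_of_dominated_convergence (K.indicator fun _ => C)
      (Filter.Eventually.of_forall fun s =>
        (contDiff_slice_x hGsm s).continuous.aestronglyMeasurable)
      (eventually_mem_nhdsWithin.mono fun s hs => Filter.Eventually.of_forall fun x => ?_)
      ((integrableOn_const hK.measure_lt_top.ne).integrable_indicator
        hK.measurableSet)
      (Filter.Eventually.of_forall fun x =>
        ((hasDerivAt_bigG hus huf t0 x).continuousAt.tendsto).mono_left nhdsWithin_le_nhds)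
    by_cases hxK : x ∈ K
    · rw [Set.indicator_of_mem hxK]
      exact hC (s, x) ⟨Ioo_subset_Icc_self hs, hxK⟩
    · rw [Set.indicator_of_notMem hxK, hG0 s (Ioo_subset_Icc_self hs) x hxK]
      simp
  have hne : (nhdsWithin (0:ℝ) (Ioo (0:ℝ) T)).NeBot := by
    rw [← mem_closure_iff_nhdsWithin_neBot, closure_Ioo hT.ne]
    exact ⟨le_refl 0, hT.le⟩
  have hneT : (nhdsWithin T (Ioo (0:ℝ) T)).NeBot := by
    rw [← mem_closure_iff_nhdsWithin_neBot, closure_Ioo hT.ne]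
    exact ⟨hT.le, le_refl T⟩
  have hF0 : (∫ x, bigG ρ11 ρ12 ρ22 lam μ q r us uf ((0:ℝ), x))
      = ∫ x, bigG ρ11 ρ12 ρ22 lam μ q r us uf (T/2, x) := by
    have h1 := hlimit 0 (left_mem_Icc.2 hT.le)
    have h2 : Tendsto (fun s => ∫ x, bigG ρ11 ρ12 ρ22 lam μ q r us uf (s, x))
        (nhdsWithin 0 (Ioo (0:ℝ) T)) (nhds (∫ x, bigG ρ11 ρ12 ρ22 lam μ q r us uf (T/2, x))) := by
      refine Tendsto.congr' ?_ tendsto_const_nhds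
      exact eventually_mem_nhdsWithin.mono fun s hs => (hIooconst s hs).symm
    exact tendsto_nhds_unique h1 h2
  have hFT : (∫ x, bigG ρ11 ρ12 ρ22 lam μ q r us uf (T, x))
      = ∫ x, bigG ρ11 ρ12 ρ22 lam μ q r us uf (T/2, x) := by
    have h1 := hlimit T (right_mem_Icc.2 hT.le)
    have h2 : Tendsto (fun s => ∫ x, bigG ρ11 ρ12 ρ22 lam μ q r us uf (s, x))
        (nhdsWithin T (Ioo (0:ℝ) T)) (nhds (∫ x, bigG ρ11 ρ12 ρ22 lam μ q r us uf (T/2, x))) := by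
      refine Tendsto.congr' ?_ tendsto_const_nhds
      exact eventually_mem_nhdsWithin.mono fun s hs => (hIooconst s hs).symm
    exact tendsto_nhds_unique h1 h2
  intro t ht
  rw [hE t ht, hE 0 (left_mem_Icc.2 hT.le)]
  rcases eq_or_lt_of_le ht.1 with h0 | h0
  · rw [← h0]
  · rcases eq_or_lt_of_le ht.2 with hT' | hT'
    · rw [hT', hFT, hF0]
    · rw [hIooconst t ⟨h0, hT'⟩, hF0]
end
end

section
/- Assume the coefficients ρ₁₁, ρ₁₂, ρ₂₂, μ, λ, q, r : ℝ³ → ℝ are smooth, bounded from below by a constant c > 0, have bounded derivatives, and satisfy ρ₁₁ρ₂₂ − ρ₁₂² > 0 and λr − q² > 0 on ℝ³. Let Ω ⊆ ℝ³ be a bounded open set, T > 0, and let f = (f^s, f^f) be a smooth pair of vector fields with support a compact subset of Ω. Let u be a smooth pair solving M(x) ∂²_t u + P(D)u = 0 on (0, T) × ℝ³ with u(0, ·) = f and ∂_t u(0, ·) = 0, and suppose there is a compact set K ⊆ ℝ³ with supp u(t, ·) ⊆ K for all t ∈ [0, T]. Let φ be a pair of C² vector fields on ℝ³ with P(D)φ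 = 0 on Ω such that u(T, ·) − φ has support a compact subset of Ω. Let w be a smooth pair on ℝ × ℝ³ with w(T, x) = u(T, x) − φ(x) and ∂_t w(T, x) = ∂_t u(T, x) for all x ∈ Ω, and suppose E_Ω(t, w) = E_Ω(T, w) for all t ∈ [0, T]. Then B_Ω(w(0, ·), w(0, ·)) · E_Ω(0, u) ≤ E_Ω(T, u) · B_Ω(f, f). -/
open MeasureTheory Set Filter Matrix

noncomputable section

namespace TRaux

lemma contDiff_comp_pi {n : WithTop ℕ∞} {v : V3 → V3} (hv : ContDiff ℝ n v) (i : Fin 3) :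
    ContDiff ℝ n (fun y => v y i) := (contDiff_pi.1 hv i)

lemma contDiff_pd {n m : WithTop ℕ∞} {f : V3 → ℝ} (hf : ContDiff ℝ n f)
    (hmn : m + 1 ≤ n) (j : Fin 3) : ContDiff ℝ m (pd j f) :=
  (hf.fderiv_right hmn).clm_apply contDiff_const

lemma pd_congr {f g : V3 → ℝ} {x : V3} (h : f =ᶠ[nhds x] g) (j : Fin 3) :
    pd j f x = pd j g x := by
  simp only [pd, h.fderiv_eq]

lemma pd_add {f g : V3 → ℝ} {x : V3} (hf : DifferentiableAt ℝ f x)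
    (hg : DifferentiableAt ℝ g x) (j : Fin 3) :
    pd j (fun y => f y + g y) x = pd j f x + pd j g x := by
  simp only [pd, fderiv_fun_add hf hg]; rfl

lemma pd_zero_of_not_mem {f : V3 → ℝ} {x : V3} (h : x ∉ tsupport f) (j : Fin 3) :
    pd j f x = 0 := by
  have : fderiv ℝ f x = 0 := by
    by_contra h'
    exact h (support_fderiv_subset ℝ (Function.mem_support.2 h'))
  simp [pd, this]

lemma hcs_pd {f : V3 → ℝ} (hf : HasCompactSupport f) (j : Fin 3) :
    HasCompactSupport (pd j f) := by
  apply hf.mono'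
  intro x hx
  by_contra h
  exact (Function.mem_support.1 hx) (pd_zero_of_not_mem h j)

/-- Integration by parts on ℝ³. -/
lemma ibp (F G : V3 → ℝ) (hF : ContDiff ℝ 1 F) (hG : ContDiff ℝ 1 G)
    (hFc : HasCompactSupport F) (j : Fin 3) :
    ∫ x : V3, F x * pd j G x = - ∫ x : V3, pd j F x * G x := by
  have hFd : Differentiable ℝ F := hF.differentiable one_ne_zero
  have hGd : Differentiable ℝ G := hG.differentiable one_ne_zero
  have hFc' : Continuous (pd j F) := (contDiff_pd (m := 0) hF (by norm_num) j).continuous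
  have hGc' : Continuous (pd j G) := (contDiff_pd (m := 0) hG (by norm_num) j).continuous
  have h1 : Integrable (fun x : V3 => pd j F x * G x) :=
    (hFc'.mul hG.continuous).integrable_of_hasCompactSupport ((hcs_pd hFc j).mul_right)
  have h2 : Integrable (fun x : V3 => F x * pd j G x) :=
    (hF.continuous.mul hGc').integrable_of_hasCompactSupport (hFc.mul_right)
  have h3 : Integrable (fun x : V3 => F x * G x) :=
    (hF.continuous.mul hG.continuous).integrable_of_hasCompactSupport (hFc.mul_right)
  simpa [pd] using
    integral_mul_fderiv_eq_neg_fderiv_mul_of_integrable (v := Pi.single j 1) h1 h2 h3 (fun x _ => hFd x) (fun x _ => hGd x)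

lemma comp_hcs {v : V3 → V3} (hv : HasCompactSupport v) (i : Fin 3) :
    HasCompactSupport (fun y => v y i) := by
  apply hv.mono'
  intro x hx
  simp only [Function.mem_support] at hx
  exact subset_tsupport v (Function.mem_support.2 (fun h => hx (by simp [h])))

lemma integrable_cs {f : V3 → ℝ} (hf : Continuous f) (h : HasCompactSupport f) :
    Integrable f := hf.integrable_of_hasCompactSupport h

lemma contDiff_vdiv {n m : WithTop ℕ∞} {v : V3 → V3} (hv : ContDiff ℝ n v)
    (hmn : m + 1 ≤ n) : ContDiff ℝ m (vdiv v) := by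
  unfold vdiv
  exact ContDiff.sum fun i _ => contDiff_pd (contDiff_comp_pi hv i) hmn i

/-- Integration by parts: `∫ ∇g · v = - ∫ g div v` for compactly supported `v`. -/
lemma ibp_grad (g : V3 → ℝ) (v : V3 → V3) (hg : ContDiff ℝ 1 g) (hv : ContDiff ℝ 1 v)
    (hvc : HasCompactSupport v) :
    ∫ x : V3, dot3 (grad g x) (v x) = - ∫ x : V3, g x * vdiv v x := by
  have hvi : ∀ i, ContDiff ℝ 1 (fun y => v y i) := contDiff_comp_pi hv
  have h2 : ∀ i : Fin 3, Integrable (fun x : V3 => pd i (fun y => v y i) x * g x) := fun i =>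
    integrable_cs ((contDiff_pd (m := 0) (hvi i) (by norm_num) i).continuous.mul hg.continuous)
      ((hcs_pd (comp_hcs hvc i) i).mul_right)
  calc ∫ x : V3, dot3 (grad g x) (v x) = ∫ x : V3, ∑ i, v x i * pd i g x := by
        refine integral_congr_ae (Eventually.of_forall fun x => ?_)
        simp [dot3, grad, mul_comm]
    _ = ∑ i, ∫ x : V3, v x i * pd i g x := by
        refine integral_finset_sum _ (fun i _ => ?_)
        exact integrable_cs ((hvi i).continuous.mul
          (contDiff_pd (m := 0) hg (by norm_num) i).continuous) ((comp_hcs hvc i).mul_right)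
    _ = ∑ i, - ∫ x : V3, pd i (fun y => v y i) x * g x :=
        Finset.sum_congr rfl (fun i _ => ibp _ _ (hvi i) hg (comp_hcs hvc i) i)
    _ = - ∑ i, ∫ x : V3, pd i (fun y => v y i) x * g x := by rw [Finset.sum_neg_distrib]
    _ = - ∫ x : V3, ∑ i, pd i (fun y => v y i) x * g x := by
        rw [integral_finset_sum _ (fun i _ => h2 i)]
    _ = - ∫ x : V3, g x * vdiv v x := by
        congr 1
        refine integral_congr_ae (Eventually.of_forall fun x => ?_)
        simp [vdiv, Finset.mul_sum, mul_comm]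

/-- Integration by parts: `∫ (div S) · v = - ∫ S : ∇v` for compactly supported `v`. -/
lemma ibp_mdiv (S : V3 → Matrix (Fin 3) (Fin 3) ℝ) (v : V3 → V3)
    (hS : ∀ i j, ContDiff ℝ 1 (fun y => S y i j)) (hv : ContDiff ℝ 1 v)
    (hvc : HasCompactSupport v) :
    ∫ x : V3, dot3 (mdiv S x) (v x)
      = - ∫ x : V3, ∑ i, ∑ j, S x i j * pd j (fun y => v y i) x := by
  have hvi : ∀ i, ContDiff ℝ 1 (fun y => v y i) := contDiff_comp_pi hv
  have h1 : ∀ (i j : Fin 3), Integrable (fun x : V3 => v x i * pd j (fun y => S y i j) x) :=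
    fun i j => integrable_cs ((hvi i).continuous.mul
      (contDiff_pd (m := 0) (hS i j) (by norm_num) j).continuous) ((comp_hcs hvc i).mul_right)
  have h2 : ∀ (i j : Fin 3), Integrable (fun x : V3 => S x i j * pd j (fun y => v y i) x) :=
    fun i j => integrable_cs ((hS i j).continuous.mul
      (contDiff_pd (m := 0) (hvi i) (by norm_num) j).continuous)
      ((hcs_pd (comp_hcs hvc i) j).mul_left)
  calc ∫ x : V3, dot3 (mdiv S x) (v x)
      = ∫ x : V3, ∑ i, ∑ j, v x i * pd j (fun y => S y i j) x := by
        refine integral_congr_ae (Eventually.of_forall fun x => ?_)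
        simp [dot3, mdiv, Finset.mul_sum, mul_comm]
    _ = ∑ i, ∑ j, ∫ x : V3, v x i * pd j (fun y => S y i j) x := by
        rw [integral_finset_sum _ (fun i _ => integrable_finset_sum _ (fun j _ => h1 i j))]
        exact Finset.sum_congr rfl fun i _ => integral_finset_sum _ (fun j _ => h1 i j)
    _ = ∑ i, ∑ j, - ∫ x : V3, pd j (fun y => v y i) x * S x i j := by
        refine Finset.sum_congr rfl fun i _ => Finset.sum_congr rfl fun j _ => ?_
        exact ibp _ _ (hvi i) (hS i j) (comp_hcs hvc i) j
    _ = - ∫ x : V3, ∑ i, ∑ j, S x i j * pd j (fun y => v y i) x := by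
        simp only [Finset.sum_neg_distrib]
        congr 1
        rw [integral_finset_sum _ (fun i _ => integrable_finset_sum _ (fun j _ => h2 i j))]
        refine Finset.sum_congr rfl fun i _ => ?_
        rw [integral_finset_sum _ (fun j _ => h2 i j)]
        refine Finset.sum_congr rfl fun j _ => ?_
        refine integral_congr_ae (Eventually.of_forall fun x => ?_)
        ring

lemma tsupport_comp_subset (v : V3 → V3) (i : Fin 3) :
    tsupport (fun y => v y i) ⊆ tsupport v :=
  closure_mono (fun y hy => Function.mem_support.2
    (fun h => (Function.mem_support.1 hy) (by simp [h])))

lemma hcs_vdiv {v : V3 → V3} (hv : HasCompactSupport v) : HasCompactSupport (vdiv v) := by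
  apply hv.mono'
  intro x hx
  by_contra hxt
  apply Function.mem_support.1 hx
  exact Finset.sum_eq_zero fun i _ =>
    pd_zero_of_not_mem (fun hmem => hxt (tsupport_comp_subset v i hmem)) i

lemma cont_dot3 {w v : V3 → V3} (hw : ∀ i, Continuous fun x => w x i) (hv : Continuous v) :
    Continuous fun x => dot3 (w x) (v x) := by
  unfold dot3
  exact continuous_finset_sum _ fun i _ => (hw i).mul ((continuous_apply i).comp hv)

lemma hcs_dot3 (w : V3 → V3) {v : V3 → V3} (hv : HasCompactSupport v) :
    HasCompactSupport fun x => dot3 (w x) (v x) := by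
  apply hv.mono'
  intro x hx
  refine subset_tsupport v (Function.mem_support.2 fun h => (Function.mem_support.1 hx) ?_)
  simp [dot3, h]

lemma dot3_nlin3 (a b c v : V3) :
    dot3 (-(a + b) - c) v = -(dot3 a v) - dot3 b v - dot3 c v := by
  simp [dot3, Fin.sum_univ_three]; ring

lemma dot3_nlin2 (a b v : V3) : dot3 (-a - b) v = -(dot3 a v) - dot3 b v := by
  simp [dot3, Fin.sum_univ_three]; ring

/-- Claim 1: `∫ B(v, φ) = ∫ P(D)φ · v` for `v` compactly supported. -/
lemma claim1 (lam μ q r : V3 → ℝ)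
    (hlam : ContDiff ℝ 1 lam) (hμ : ContDiff ℝ 1 μ) (hq : ContDiff ℝ 1 q) (hr : ContDiff ℝ 1 r)
    (vs vf φs φf : V3 → V3)
    (hvs : ContDiff ℝ 1 vs) (hvf : ContDiff ℝ 1 vf)
    (hφs : ContDiff ℝ 2 φs) (hφf : ContDiff ℝ 2 φf)
    (hvsc : HasCompactSupport vs) (hvfc : HasCompactSupport vf) :
    ∫ x : V3, Bint lam μ q r vs vf φs φf x
      = ∫ x : V3, (dot3 (PD1 μ lam q φs φf x) (vs x) + dot3 (PD2 q r φs φf x) (vf x)) := by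
  -- abbreviations
  set S : V3 → Matrix (Fin 3) (Fin 3) ℝ := fun y => μ y • (jac φs y + (jac φs y)ᵀ) with hSdef
  set g1 : V3 → ℝ := fun y => lam y * vdiv φs y with hg1def
  set g2 : V3 → ℝ := fun y => q y * vdiv φf y with hg2def
  set g3 : V3 → ℝ := fun y => q y * vdiv φs y with hg3def
  set g4 : V3 → ℝ := fun y => r y * vdiv φf y with hg4def
  -- regularity
  have hdφs : ContDiff ℝ 1 (vdiv φs) := contDiff_vdiv hφs (by norm_num)
  have hdφf : ContDiff ℝ 1 (vdiv φf) := contDiff_vdiv hφf (by norm_num)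
  have hdvs : ContDiff ℝ 0 (vdiv vs) := contDiff_vdiv hvs (by norm_num)
  have hdvf : ContDiff ℝ 0 (vdiv vf) := contDiff_vdiv hvf (by norm_num)
  have hg1 : ContDiff ℝ 1 g1 := hlam.mul hdφs
  have hg2 : ContDiff ℝ 1 g2 := hq.mul hdφf
  have hg3 : ContDiff ℝ 1 g3 := hq.mul hdφs
  have hg4 : ContDiff ℝ 1 g4 := hr.mul hdφf
  have hSij : ∀ i j, ContDiff ℝ 1 (fun y => S y i j) := by
    intro i j
    have e : (fun y => S y i j)
        = fun y => μ y * (pd j (fun z => φs z i) y + pd i (fun z => φs z j) y) := by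
      funext y
      simp [hSdef, jac, Matrix.smul_apply, Matrix.add_apply, Matrix.transpose_apply, mul_add]
    rw [e]
    exact hμ.mul ((contDiff_pd (m := 1) (contDiff_comp_pi hφs i) (by norm_num) j).add
      (contDiff_pd (m := 1) (contDiff_comp_pi hφs j) (by norm_num) i))
  -- the five pieces (before integration by parts)
  set A1 : V3 → ℝ := fun x => dot3 (grad g1 x) (vs x) with hA1
  set A2 : V3 → ℝ := fun x => dot3 (grad g2 x) (vs x) with hA2
  set A3 : V3 → ℝ := fun x => dot3 (grad g3 x) (vf x) with hA3
  set A4 : V3 → ℝ := fun x => dot3 (grad g4 x) (vf x) with hA4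
  set A5 : V3 → ℝ := fun x => dot3 (mdiv S x) (vs x) with hA5
  -- continuity and integrability of the pieces
  have contgrad : ∀ (g : V3 → ℝ), ContDiff ℝ 1 g → ∀ i : Fin 3, Continuous fun x => grad g x i :=
    fun g hg i => (contDiff_pd (m := 0) hg (by norm_num) i).continuous
  have IA1 : Integrable A1 := integrable_cs
    (cont_dot3 (contgrad g1 hg1) hvs.continuous) (hcs_dot3 _ hvsc)
  have IA2 : Integrable A2 := integrable_cs
    (cont_dot3 (contgrad g2 hg2) hvs.continuous) (hcs_dot3 _ hvsc)
  have IA3 : Integrable A3 := integrable_cs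
    (cont_dot3 (contgrad g3 hg3) hvf.continuous) (hcs_dot3 _ hvfc)
  have IA4 : Integrable A4 := integrable_cs
    (cont_dot3 (contgrad g4 hg4) hvf.continuous) (hcs_dot3 _ hvfc)
  have IA5 : Integrable A5 := by
    refine integrable_cs (cont_dot3 (fun i => ?_) hvs.continuous) (hcs_dot3 _ hvsc)
    exact continuous_finset_sum _ fun j _ =>
      (contDiff_pd (m := 0) (hSij i j) (by norm_num) j).continuous
  -- integration by parts on each piece
  have E1 : ∫ x : V3, A1 x = - ∫ x : V3, g1 x * vdiv vs x := ibp_grad g1 vs hg1 hvs hvsc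
  have E2 : ∫ x : V3, A2 x = - ∫ x : V3, g2 x * vdiv vs x := ibp_grad g2 vs hg2 hvs hvsc
  have E3 : ∫ x : V3, A3 x = - ∫ x : V3, g3 x * vdiv vf x := ibp_grad g3 vf hg3 hvf hvfc
  have E4 : ∫ x : V3, A4 x = - ∫ x : V3, g4 x * vdiv vf x := ibp_grad g4 vf hg4 hvf hvfc
  have E5 : ∫ x : V3, A5 x
      = - ∫ x : V3, 2 * μ x * frob (eps vs x) (eps φs x) := by
    rw [ibp_mdiv S vs hSij hvs hvsc]
    congr 1
    refine integral_congr_ae (Eventually.of_forall fun x => ?_)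
    simp [hSdef, eps, jac, frob, Matrix.trace, Matrix.mul_apply, Fin.sum_univ_three,
      Matrix.smul_apply, Matrix.add_apply, Matrix.transpose_apply, Matrix.diag, mul_add]
    ring
  -- integrability of the post-IBP pieces
  have IB1 : Integrable (fun x : V3 => g1 x * vdiv vs x) := integrable_cs
    (hg1.continuous.mul hdvs.continuous) ((hcs_vdiv hvsc).mul_left)
  have IB2 : Integrable (fun x : V3 => g2 x * vdiv vs x) := integrable_cs
    (hg2.continuous.mul hdvs.continuous) ((hcs_vdiv hvsc).mul_left)
  have IB3 : Integrable (fun x : V3 => g3 x * vdiv vf x) := integrable_cs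
    (hg3.continuous.mul hdvf.continuous) ((hcs_vdiv hvfc).mul_left)
  have IB4 : Integrable (fun x : V3 => g4 x * vdiv vf x) := integrable_cs
    (hg4.continuous.mul hdvf.continuous) ((hcs_vdiv hvfc).mul_left)
  have IB5 : Integrable (fun x : V3 => 2 * μ x * frob (eps vs x) (eps φs x)) := by
    have e : ∀ x : V3, (∑ i, ∑ j, S x i j * pd j (fun y => vs y i) x)
        = 2 * μ x * frob (eps vs x) (eps φs x) := fun x => by
      simp [hSdef, eps, jac, frob, Matrix.trace, Matrix.mul_apply, Fin.sum_univ_three,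
        Matrix.smul_apply, Matrix.add_apply, Matrix.transpose_apply, Matrix.diag, mul_add]
      ring
    have Iseq : Integrable (fun x : V3 => ∑ i, ∑ j, S x i j * pd j (fun y => vs y i) x) := by
      refine integrable_finset_sum _ fun i _ => integrable_finset_sum _ fun j _ => ?_
      exact integrable_cs ((hSij i j).continuous.mul
        (contDiff_pd (m := 0) (contDiff_comp_pi hvs i) (by norm_num) j).continuous)
        ((hcs_pd (comp_hcs hvsc i) j).mul_left)
    exact Iseq.congr (Eventually.of_forall e)
  -- pointwise expansion of the right-hand side
  have hRHS : ∀ x : V3, dot3 (PD1 μ lam q φs φf x) (vs x) + dot3 (PD2 q r φs φf x) (vf x)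
      = (-(A5 x) - A1 x - A2 x) + (-(A3 x) - A4 x) := by
    intro x
    have h1 : PD1 μ lam q φs φf x = -(mdiv S x + grad g1 x) - grad g2 x := rfl
    have h2 : PD2 q r φs φf x = -(grad g3 x) - grad g4 x := rfl
    rw [h1, h2, dot3_nlin3, dot3_nlin2]
  have J1 : Integrable (fun x : V3 => g1 x * vdiv vs x
      + 2 * μ x * frob (eps vs x) (eps φs x) + g2 x * vdiv vs x) := (IB1.add IB5).add IB2
  have J2 : Integrable (fun x : V3 => g3 x * vdiv vf x + g4 x * vdiv vf x) := IB3.add IB4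
  have J3 : Integrable (fun x : V3 => g1 x * vdiv vs x
      + 2 * μ x * frob (eps vs x) (eps φs x)) := IB1.add IB5
  have K1 : Integrable (fun x : V3 => -(A5 x) - A1 x - A2 x) := (IA5.neg.sub IA1).sub IA2
  have K2 : Integrable (fun x : V3 => -(A3 x) - A4 x) := IA3.neg.sub IA4
  have K3 : Integrable (fun x : V3 => -(A5 x) - A1 x) := IA5.neg.sub IA1
  have K4 : Integrable (fun x : V3 => -(A5 x)) := IA5.neg
  have K5 : Integrable (fun x : V3 => -(A3 x)) := IA3.neg
  calc ∫ x : V3, Bint lam μ q r vs vf φs φf x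
      = ∫ x : V3, ((g1 x * vdiv vs x + 2 * μ x * frob (eps vs x) (eps φs x)
          + g2 x * vdiv vs x) + (g3 x * vdiv vf x + g4 x * vdiv vf x)) := by
        refine integral_congr_ae (Eventually.of_forall fun x => ?_)
        simp only [Bint, hg1def, hg2def, hg3def, hg4def]
        ring
    _ = ((∫ x : V3, g1 x * vdiv vs x) + (∫ x : V3, 2 * μ x * frob (eps vs x) (eps φs x))
          + ∫ x : V3, g2 x * vdiv vs x)
          + ((∫ x : V3, g3 x * vdiv vf x) + ∫ x : V3, g4 x * vdiv vf x) := by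
        rw [integral_add J1 J2, integral_add J3 IB2, integral_add IB1 IB5, integral_add IB3 IB4]
    _ = ∫ x : V3, ((-(A5 x) - A1 x - A2 x) + (-(A3 x) - A4 x)) := by
        rw [integral_add K1 K2, integral_sub K3 IA2, integral_sub K4 IA1,
          integral_sub K5 IA4, integral_neg, integral_neg, E1, E2, E3, E4, E5]
        ring
    _ = ∫ x : V3, (dot3 (PD1 μ lam q φs φf x) (vs x) + dot3 (PD2 q r φs φf x) (vf x)) := by
        refine integral_congr_ae (Eventually.of_forall fun x => ?_)
        exact (hRHS x).symm
lemma integrableOn_bdd {f : V3 → ℝ} (hf : Continuous f) {Ω : Set V3}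
    (hb : Bornology.IsBounded Ω) : IntegrableOn f Ω := by
  exact (hf.continuousOn.integrableOn_compact hb.isCompact_closure).mono_set subset_closure

lemma quad_nonneg {p qq rr A B C : ℝ} (hp : 0 < p) (hpr : 0 < p * rr - qq ^ 2)
    (hA : 0 ≤ A) (hC : 0 ≤ C) (hB : B ^ 2 ≤ A * C) : 0 ≤ p * A + 2 * qq * B + rr * C := by
  rcases eq_or_lt_of_le hC with h | h
  · have hB0 : B = 0 := by nlinarith
    rw [hB0, ← h]
    nlinarith [mul_nonneg hp.le hA]
  · nlinarith [sq_nonneg (p * B + qq * C), mul_pos hp h,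
      mul_nonneg (mul_nonneg hp.le hp.le) (sub_nonneg.2 hB), mul_pos hpr (mul_pos h h)]

lemma dot3_self_nonneg (a : V3) : 0 ≤ dot3 a a := by
  simp only [dot3, Fin.sum_univ_three]
  nlinarith [sq_nonneg (a 0), sq_nonneg (a 1), sq_nonneg (a 2)]

lemma dot3_sq_le (a b : V3) : (dot3 a b) ^ 2 ≤ dot3 a a * dot3 b b := by
  simp only [dot3, Fin.sum_univ_three]
  nlinarith [sq_nonneg (a 0 * b 1 - a 1 * b 0), sq_nonneg (a 0 * b 2 - a 2 * b 0),
    sq_nonneg (a 1 * b 2 - a 2 * b 1)]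

lemma kin_nonneg {p11 p12 p22 : ℝ} (h11 : 0 < p11) (hdet : 0 < p11 * p22 - p12 ^ 2) (a b : V3) :
    0 ≤ p11 * dot3 a a + 2 * p12 * dot3 a b + p22 * dot3 b b :=
  quad_nonneg h11 hdet (dot3_self_nonneg a) (dot3_self_nonneg b) (dot3_sq_le a b)

lemma frob_self_nonneg (A : Matrix (Fin 3) (Fin 3) ℝ) : 0 ≤ frob A A := by
  simp only [frob, Matrix.trace, Matrix.mul_apply, Matrix.transpose_apply, Matrix.diag,
    Fin.sum_univ_three]
  nlinarith [sq_nonneg (A 0 0), sq_nonneg (A 0 1), sq_nonneg (A 0 2), sq_nonneg (A 1 0),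
    sq_nonneg (A 1 1), sq_nonneg (A 1 2), sq_nonneg (A 2 0), sq_nonneg (A 2 1), sq_nonneg (A 2 2)]

lemma Bint_self_nonneg {lam μ q r : V3 → ℝ} {c : ℝ} (hc : 0 < c)
    (hlam : ∀ y, c ≤ lam y) (hμ : ∀ y, c ≤ μ y) (hB : ∀ y, 0 < lam y * r y - q y ^ 2)
    (vs vf : V3 → V3) (x : V3) : 0 ≤ Bint lam μ q r vs vf vs vf x := by
  have h1 : 0 ≤ lam x * (vdiv vs x) ^ 2 + 2 * q x * (vdiv vs x * vdiv vf x)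
      + r x * (vdiv vf x) ^ 2 :=
    quad_nonneg (lt_of_lt_of_le hc (hlam x)) (hB x) (sq_nonneg _) (sq_nonneg _)
      (le_of_eq (by ring))
  have h2 : 0 ≤ 2 * μ x * frob (eps vs x) (eps vs x) := by
    have := frob_self_nonneg (eps vs x)
    nlinarith [lt_of_lt_of_le hc (hμ x)]
  unfold Bint
  nlinarith [h1, h2]

lemma eventuallyEq_of_eqOn {f g : V3 → V3} {Ω : Set V3} (hΩ : IsOpen Ω)
    (h : ∀ y ∈ Ω, f y = g y) {x : V3} (hx : x ∈ Ω) (i : Fin 3) :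
    (fun y => f y i) =ᶠ[nhds x] (fun y => g y i) :=
  eventuallyEq_iff_exists_mem.2 ⟨Ω, hΩ.mem_nhds hx, fun y hy => by
    show f y i = g y i; rw [h y hy]⟩

lemma vdiv_congr_on {v w : V3 → V3} {Ω : Set V3} (hΩ : IsOpen Ω)
    (h : ∀ y ∈ Ω, v y = w y) {x : V3} (hx : x ∈ Ω) : vdiv v x = vdiv w x :=
  Finset.sum_congr rfl fun i _ => pd_congr (eventuallyEq_of_eqOn hΩ h hx i) i

lemma jac_congr_on {v w : V3 → V3} {Ω : Set V3} (hΩ : IsOpen Ω)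
    (h : ∀ y ∈ Ω, v y = w y) {x : V3} (hx : x ∈ Ω) : jac v x = jac w x := by
  funext i j
  exact pd_congr (eventuallyEq_of_eqOn hΩ h hx i) j

lemma Bint_congr_on {lam μ q r : V3 → ℝ} {vs vf vs' vf' : V3 → V3} {Ω : Set V3}
    (hΩ : IsOpen Ω) (hs : ∀ y ∈ Ω, vs y = vs' y) (hf : ∀ y ∈ Ω, vf y = vf' y)
    {x : V3} (hx : x ∈ Ω) :
    Bint lam μ q r vs vf vs vf x = Bint lam μ q r vs' vf' vs' vf' x := by
  unfold Bint eps
  rw [vdiv_congr_on hΩ hs hx, vdiv_congr_on hΩ hf hx, jac_congr_on hΩ hs hx]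

lemma vdiv_add {a b : V3 → V3} (ha : ContDiff ℝ 1 a) (hb : ContDiff ℝ 1 b) (x : V3) :
    vdiv (a + b) x = vdiv a x + vdiv b x := by
  unfold vdiv
  rw [← Finset.sum_add_distrib]
  refine Finset.sum_congr rfl fun i _ => ?_
  have e : (fun y => (a + b) y i) = fun y => a y i + b y i := rfl
  rw [e, pd_add ((contDiff_comp_pi ha i).differentiable one_ne_zero).differentiableAt
    ((contDiff_comp_pi hb i).differentiable one_ne_zero).differentiableAt]

lemma jac_add {a b : V3 → V3} (ha : ContDiff ℝ 1 a) (hb : ContDiff ℝ 1 b) (x : V3) :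
    jac (a + b) x = jac a x + jac b x := by
  funext i j
  show pd j (fun y => (a + b) y i) x = jac a x i j + jac b x i j
  have e : (fun y => (a + b) y i) = fun y => a y i + b y i := rfl
  rw [e, pd_add ((contDiff_comp_pi ha i).differentiable one_ne_zero).differentiableAt
    ((contDiff_comp_pi hb i).differentiable one_ne_zero).differentiableAt]
  rfl

lemma eps_add {a b : V3 → V3} (ha : ContDiff ℝ 1 a) (hb : ContDiff ℝ 1 b) (x : V3) :
    eps (a + b) x = eps a x + eps b x := by
  unfold eps
  rw [jac_add ha hb, Matrix.transpose_add,
    show jac a x + jac b x + ((jac a x)ᵀ + (jac b x)ᵀ)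
      = (jac a x + (jac a x)ᵀ) + (jac b x + (jac b x)ᵀ) by abel, smul_add]

lemma frob_add_left (A B C : Matrix (Fin 3) (Fin 3) ℝ) :
    frob (A + B) C = frob A C + frob B C := by simp [frob, Matrix.add_mul]

lemma frob_add_right (A B C : Matrix (Fin 3) (Fin 3) ℝ) :
    frob A (B + C) = frob A B + frob A C := by
  simp [frob, Matrix.transpose_add, Matrix.mul_add]

lemma frob_comm (A B : Matrix (Fin 3) (Fin 3) ℝ) : frob A B = frob B A := by
  rw [frob, frob]
  conv_lhs => rw [← Matrix.trace_transpose, Matrix.transpose_mul, Matrix.transpose_transpose]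

lemma frob_zero_left (A : Matrix (Fin 3) (Fin 3) ℝ) : frob 0 A = 0 := by simp [frob]

lemma Bint_expand {lam μ q r : V3 → ℝ} {a b φs φf : V3 → V3}
    (ha : ContDiff ℝ 1 a) (hb : ContDiff ℝ 1 b)
    (hφs : ContDiff ℝ 1 φs) (hφf : ContDiff ℝ 1 φf) (x : V3) :
    Bint lam μ q r (a + φs) (b + φf) (a + φs) (b + φf) x
      = Bint lam μ q r a b a b x + 2 * Bint lam μ q r a b φs φf x
        + Bint lam μ q r φs φf φs φf x := by
  unfold Bint
  rw [vdiv_add ha hφs, vdiv_add hb hφf, eps_add ha hφs]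
  simp only [frob_add_left, frob_add_right]
  rw [frob_comm (eps φs x) (eps a x)]
  ring

lemma cont_eps_entry {v : V3 → V3} (hv : ContDiff ℝ 1 v) (i j : Fin 3) :
    Continuous fun x => eps v x i j := by
  have e : (fun x => eps v x i j)
      = fun x => (1/2 : ℝ) * (pd j (fun y => v y i) x + pd i (fun y => v y j) x) := rfl
  rw [e]
  exact continuous_const.mul
    (((contDiff_pd (m := 0) (contDiff_comp_pi hv i) (by norm_num) j).continuous).add
      ((contDiff_pd (m := 0) (contDiff_comp_pi hv j) (by norm_num) i).continuous))

lemma cont_frob_eps {v w : V3 → V3} (hv : ContDiff ℝ 1 v) (hw : ContDiff ℝ 1 w) :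
    Continuous fun x => frob (eps v x) (eps w x) := by
  have e : (fun x => frob (eps v x) (eps w x))
      = fun x => ∑ i, ∑ j, eps v x i j * eps w x i j := by
    funext x
    simp [frob, Matrix.trace, Matrix.mul_apply, Matrix.diag, Matrix.transpose_apply]
  rw [e]
  exact continuous_finset_sum _ fun i _ => continuous_finset_sum _ fun j _ =>
    (cont_eps_entry hv i j).mul (cont_eps_entry hw i j)

lemma cont_vdiv {v : V3 → V3} (hv : ContDiff ℝ 1 v) : Continuous (vdiv v) :=
  (contDiff_vdiv (m := 0) hv (by norm_num)).continuous

lemma cont_Bint {lam μ q r : V3 → ℝ} (hlam : Continuous lam) (hμ : Continuous μ)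
    (hq : Continuous q) (hr : Continuous r) {vs vf ws wf : V3 → V3}
    (h1 : ContDiff ℝ 1 vs) (h2 : ContDiff ℝ 1 vf) (h3 : ContDiff ℝ 1 ws)
    (h4 : ContDiff ℝ 1 wf) : Continuous (Bint lam μ q r vs vf ws wf) := by
  unfold Bint
  exact ((((hlam.mul (cont_vdiv h1)).mul (cont_vdiv h3)).add
    ((continuous_const.mul hμ).mul (cont_frob_eps h1 h3))).add
    ((hr.mul (cont_vdiv h2)).mul (cont_vdiv h4))).add
    (hq.mul (((cont_vdiv h2).mul (cont_vdiv h3)).add ((cont_vdiv h1).mul (cont_vdiv h4))))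

lemma vdiv_zero_of_not_mem {v : V3 → V3} {x : V3} (h : x ∉ tsupport v) : vdiv v x = 0 :=
  Finset.sum_eq_zero fun i _ =>
    pd_zero_of_not_mem (fun hm => h (tsupport_comp_subset v i hm)) i

lemma eps_zero_of_not_mem {v : V3 → V3} {x : V3} (h : x ∉ tsupport v) : eps v x = 0 := by
  have hj : jac v x = 0 := by
    funext i j
    exact pd_zero_of_not_mem (fun hm => h (tsupport_comp_subset v i hm)) j
  simp [eps, hj]

end TRaux

open TRaux in
/-- Key estimate in the time-reversal argument (Claim 1 of the main theorem). -/
theorem time_reversal_estimate_15 (c : ℝ) (hc : 0 < c)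
    (ρ11 ρ12 ρ22 μ lam q r : V3 → ℝ)
    (h11 : GoodCoeff c ρ11) (h12 : GoodCoeff c ρ12) (h22 : GoodCoeff c ρ22)
    (hμ : GoodCoeff c μ) (hlam : GoodCoeff c lam) (hq : GoodCoeff c q) (hr : GoodCoeff c r)
    (hM : ∀ x, 0 < ρ11 x * ρ22 x - ρ12 x ^ 2)
    (hB : ∀ x, 0 < lam x * r x - q x ^ 2)
    (Ω : Set V3) (hΩ : IsOpen Ω) (hΩbd : Bornology.IsBounded Ω)
    (T : ℝ) (hT : 0 < T) (fs ff : V3 → V3)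
    (hfs : ContDiff ℝ (⊤ : ℕ∞) fs) (hff : ContDiff ℝ (⊤ : ℕ∞) ff)
    (hfsupp : HasCompactSupport fs ∧ HasCompactSupport ff ∧
      tsupport fs ⊆ Ω ∧ tsupport ff ⊆ Ω)
    (us uf : ℝ → V3 → V3)
    (hus : ContDiff ℝ (⊤ : ℕ∞) (fun p : ℝ × V3 => us p.1 p.2))
    (huf : ContDiff ℝ (⊤ : ℕ∞) (fun p : ℝ × V3 => uf p.1 p.2))
    (heq : ∀ t ∈ Set.Ioo (0 : ℝ) T, ∀ x : V3,
      ρ11 x • dt2v us t x + ρ12 x • dt2v uf t x + PD1 μ lam q (us t) (uf t) x = 0 ∧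
      ρ12 x • dt2v us t x + ρ22 x • dt2v uf t x + PD2 q r (us t) (uf t) x = 0)
    (hinit : us 0 = fs ∧ uf 0 = ff)
    (hinit' : ∀ x : V3, dtv us 0 x = 0 ∧ dtv uf 0 x = 0)
    (husupp : ∃ K : Set V3, IsCompact K ∧
      ∀ t ∈ Set.Icc (0 : ℝ) T, Function.support (us t) ⊆ K ∧ Function.support (uf t) ⊆ K)
    (φs φf : V3 → V3) (hφs : ContDiff ℝ 2 φs) (hφf : ContDiff ℝ 2 φf)
    (hPDφ : ∀ x ∈ Ω, PD1 μ lam q φs φf x = 0 ∧ PD2 q r φs φf x = 0)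
    (hdiffsupp : HasCompactSupport (us T - φs) ∧ HasCompactSupport (uf T - φf) ∧
      tsupport (us T - φs) ⊆ Ω ∧ tsupport (uf T - φf) ⊆ Ω)
    (Ws Wf : ℝ → V3 → V3)
    (hWs : ContDiff ℝ (⊤ : ℕ∞) (fun p : ℝ × V3 => Ws p.1 p.2))
    (hWf : ContDiff ℝ (⊤ : ℕ∞) (fun p : ℝ × V3 => Wf p.1 p.2))
    (hWT : ∀ x ∈ Ω, Ws T x = us T x - φs x ∧ Wf T x = uf T x - φf x)
    (hWT' : ∀ x ∈ Ω, dtv Ws T x = dtv us T x ∧ dtv Wf T x = dtv uf T x)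
    (hWenergy : ∀ t ∈ Set.Icc (0 : ℝ) T,
      energy ρ11 ρ12 ρ22 lam μ q r Ω Ws Wf t = energy ρ11 ρ12 ρ22 lam μ q r Ω Ws Wf T) :
    Bform lam μ q r Ω (Ws 0) (Wf 0) (Ws 0) (Wf 0) * energy ρ11 ρ12 ρ22 lam μ q r Ω us uf 0 ≤ energy ρ11 ρ12 ρ22 lam μ q r Ω us uf T * Bform lam μ q r Ω fs ff fs ff := by
  obtain ⟨hfsc, hffc, hfsΩ, hffΩ⟩ := hfsupp
  obtain ⟨hvSc, hvFc, hvSΩ, hvFΩ⟩ := hdiffsupp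
  have hmeas := hΩ.measurableSet
  have hlam1 : ContDiff ℝ 1 lam := hlam.1.of_le (by simp)
  have hμ1 : ContDiff ℝ 1 μ := hμ.1.of_le (by simp)
  have hq1 : ContDiff ℝ 1 q := hq.1.of_le (by simp)
  have hr1 : ContDiff ℝ 1 r := hr.1.of_le (by simp)
  have hφs1 : ContDiff ℝ 1 φs := hφs.of_le (by norm_num)
  have hφf1 : ContDiff ℝ 1 φf := hφf.of_le (by norm_num)
  have husT : ContDiff ℝ 2 (us T) := by
    have h := hus.comp (ContDiff.prodMk (contDiff_const (c := T)) contDiff_id)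
    exact h.of_le (WithTop.coe_le_coe.2 le_top)
  have hufT : ContDiff ℝ 2 (uf T) := by
    have h := huf.comp (ContDiff.prodMk (contDiff_const (c := T)) contDiff_id)
    exact h.of_le (WithTop.coe_le_coe.2 le_top)
  have hvS2 : ContDiff ℝ 2 (us T - φs) := husT.sub hφs
  have hvF2 : ContDiff ℝ 2 (uf T - φf) := hufT.sub hφf
  have hvS1 : ContDiff ℝ 1 (us T - φs) := hvS2.of_le (by norm_num)
  have hvF1 : ContDiff ℝ 1 (uf T - φf) := hvF2.of_le (by norm_num)
  have husT1 : ContDiff ℝ 1 (us T) := husT.of_le (by norm_num)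
  have hufT1 : ContDiff ℝ 1 (uf T) := hufT.of_le (by norm_num)
  -- Initial energy of u is B(f, f)
  have hE0u : energy ρ11 ρ12 ρ22 lam μ q r Ω us uf 0 = Bform lam μ q r Ω fs ff fs ff := by
    unfold energy
    have h0 : (∫ x in Ω, (ρ11 x * dot3 (dtv us 0 x) (dtv us 0 x)
        + 2 * ρ12 x * dot3 (dtv us 0 x) (dtv uf 0 x)
        + ρ22 x * dot3 (dtv uf 0 x) (dtv uf 0 x))) = 0 := by
      rw [setIntegral_congr_fun hmeas (g := fun _ => (0 : ℝ)) (fun x _ => by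
        rw [(hinit' x).1, (hinit' x).2]; simp [dot3])]
      simp
    rw [h0, hinit.1, hinit.2, zero_add]
  have hBf_nonneg : 0 ≤ Bform lam μ q r Ω fs ff fs ff :=
    setIntegral_nonneg hmeas fun x _ => Bint_self_nonneg hc hlam.2.1 hμ.2.1 hB fs ff x
  -- B(w(0)) ≤ E(0, w)
  have hEW0 : Bform lam μ q r Ω (Ws 0) (Wf 0) (Ws 0) (Wf 0)
      ≤ energy ρ11 ρ12 ρ22 lam μ q r Ω Ws Wf 0 := by
    have hk : 0 ≤ ∫ x in Ω, (ρ11 x * dot3 (dtv Ws 0 x) (dtv Ws 0 x)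
        + 2 * ρ12 x * dot3 (dtv Ws 0 x) (dtv Wf 0 x)
        + ρ22 x * dot3 (dtv Wf 0 x) (dtv Wf 0 x)) :=
      setIntegral_nonneg hmeas fun x _ =>
        kin_nonneg (lt_of_lt_of_le hc (h11.2.1 x)) (hM x) _ _
    unfold energy
    linarith
  -- E(T, w) in terms of u and φ
  have hET : energy ρ11 ρ12 ρ22 lam μ q r Ω Ws Wf T
      = (∫ x in Ω, (ρ11 x * dot3 (dtv us T x) (dtv us T x)
          + 2 * ρ12 x * dot3 (dtv us T x) (dtv uf T x)
          + ρ22 x * dot3 (dtv uf T x) (dtv uf T x)))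
        + ∫ x in Ω, Bint lam μ q r (us T - φs) (uf T - φf) (us T - φs) (uf T - φf) x := by
    unfold energy Bform
    congr 1
    · exact setIntegral_congr_fun hmeas fun x hx => by rw [(hWT' x hx).1, (hWT' x hx).2]
    · refine setIntegral_congr_fun hmeas fun x hx => ?_
      exact Bint_congr_on hΩ (fun y hy => by rw [(hWT y hy).1, Pi.sub_apply])
        (fun y hy => by rw [(hWT y hy).2, Pi.sub_apply]) hx
  -- Splitting of B(u(T), u(T))
  have hIv : IntegrableOn
      (Bint lam μ q r (us T - φs) (uf T - φf) (us T - φs) (uf T - φf)) Ω :=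
    integrableOn_bdd (cont_Bint hlam1.continuous hμ1.continuous hq1.continuous
      hr1.continuous hvS1 hvF1 hvS1 hvF1) hΩbd
  have hIx : IntegrableOn
      (fun x => 2 * Bint lam μ q r (us T - φs) (uf T - φf) φs φf x) Ω :=
    (integrableOn_bdd (cont_Bint hlam1.continuous hμ1.continuous hq1.continuous
      hr1.continuous hvS1 hvF1 hφs1 hφf1) hΩbd).const_mul 2
  have hIφ : IntegrableOn (Bint lam μ q r φs φf φs φf) Ω :=
    integrableOn_bdd (cont_Bint hlam1.continuous hμ1.continuous hq1.continuous
      hr1.continuous hφs1 hφf1 hφs1 hφf1) hΩbd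
  have hIvx : Integrable (fun x =>
      Bint lam μ q r (us T - φs) (uf T - φf) (us T - φs) (uf T - φf) x
        + 2 * Bint lam μ q r (us T - φs) (uf T - φf) φs φf x) (volume.restrict Ω) :=
    hIv.add hIx
  have hfuns : us T = (us T - φs) + φs := by funext y; simp
  have hfunf : uf T = (uf T - φf) + φf := by funext y; simp
  have hsplit : Bform lam μ q r Ω (us T) (uf T) (us T) (uf T)
      = (∫ x in Ω, Bint lam μ q r (us T - φs) (uf T - φf) (us T - φs) (uf T - φf) x)
        + 2 * (∫ x in Ω, Bint lam μ q r (us T - φs) (uf T - φf) φs φf x)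
        + ∫ x in Ω, Bint lam μ q r φs φf φs φf x := by
    unfold Bform
    rw [setIntegral_congr_fun hmeas
      (g := fun x => Bint lam μ q r (us T - φs) (uf T - φf) (us T - φs) (uf T - φf) x
        + 2 * Bint lam μ q r (us T - φs) (uf T - φf) φs φf x
        + Bint lam μ q r φs φf φs φf x)
      (fun x _ => by
        conv_lhs => rw [hfuns, hfunf]
        exact Bint_expand hvS1 hvF1 hφs1 hφf1 x)]
    rw [integral_add hIvx hIφ, integral_add hIv hIx, integral_const_mul]
  -- The cross term vanishes (integration by parts + P(D)φ = 0)
  have hout : ∀ x, x ∉ Ω → Bint lam μ q r (us T - φs) (uf T - φf) φs φf x = 0 := by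
    intro x hx
    have h1 : x ∉ tsupport (us T - φs) := fun hmem => hx (hvSΩ hmem)
    have h2 : x ∉ tsupport (uf T - φf) := fun hmem => hx (hvFΩ hmem)
    unfold Bint
    rw [vdiv_zero_of_not_mem h1, vdiv_zero_of_not_mem h2, eps_zero_of_not_mem h1,
      frob_zero_left]
    ring
  have hcross : (∫ x in Ω, Bint lam μ q r (us T - φs) (uf T - φf) φs φf x) = 0 := by
    rw [setIntegral_eq_integral_of_forall_compl_eq_zero hout,
      claim1 lam μ q r hlam1 hμ1 hq1 hr1 _ _ _ _ hvS1 hvF1 hφs hφf hvSc hvFc]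
    have hz : ∀ x : V3, dot3 (PD1 μ lam q φs φf x) ((us T - φs) x)
        + dot3 (PD2 q r φs φf x) ((uf T - φf) x) = 0 := by
      intro x
      by_cases hx : x ∈ Ω
      · rw [(hPDφ x hx).1, (hPDφ x hx).2]; simp [dot3]
      · have h1 : (us T - φs) x = 0 :=
          image_eq_zero_of_notMem_tsupport (fun hmem => hx (hvSΩ hmem))
        have h2 : (uf T - φf) x = 0 :=
          image_eq_zero_of_notMem_tsupport (fun hmem => hx (hvFΩ hmem))
        rw [h1, h2]; simp [dot3]
    calc ∫ x : V3, (dot3 (PD1 μ lam q φs φf x) ((us T - φs) x)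
          + dot3 (PD2 q r φs φf x) ((uf T - φf) x))
        = ∫ _x : V3, (0 : ℝ) := integral_congr_ae (Eventually.of_forall hz)
      _ = 0 := by simp
  have hBφ : 0 ≤ ∫ x in Ω, Bint lam μ q r φs φf φs φf x :=
    setIntegral_nonneg hmeas fun x _ => Bint_self_nonneg hc hlam.2.1 hμ.2.1 hB φs φf x
  have hvle : (∫ x in Ω, Bint lam μ q r (us T - φs) (uf T - φf) (us T - φs) (uf T - φf) x)
      ≤ Bform lam μ q r Ω (us T) (uf T) (us T) (uf T) := by
    rw [hsplit, hcross]
    linarith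
  -- Assemble the chain of inequalities
  have chain : Bform lam μ q r Ω (Ws 0) (Wf 0) (Ws 0) (Wf 0)
      ≤ energy ρ11 ρ12 ρ22 lam μ q r Ω us uf T := by
    calc Bform lam μ q r Ω (Ws 0) (Wf 0) (Ws 0) (Wf 0)
        ≤ energy ρ11 ρ12 ρ22 lam μ q r Ω Ws Wf 0 := hEW0
      _ = energy ρ11 ρ12 ρ22 lam μ q r Ω Ws Wf T := hWenergy 0 ⟨le_refl 0, hT.le⟩
      _ = (∫ x in Ω, (ρ11 x * dot3 (dtv us T x) (dtv us T x)
            + 2 * ρ12 x * dot3 (dtv us T x) (dtv uf T x)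
            + ρ22 x * dot3 (dtv uf T x) (dtv uf T x)))
          + ∫ x in Ω, Bint lam μ q r (us T - φs) (uf T - φf) (us T - φs) (uf T - φf) x :=
          hET
      _ ≤ (∫ x in Ω, (ρ11 x * dot3 (dtv us T x) (dtv us T x)
            + 2 * ρ12 x * dot3 (dtv us T x) (dtv uf T x)
            + ρ22 x * dot3 (dtv uf T x) (dtv uf T x)))
          + Bform lam μ q r Ω (us T) (uf T) (us T) (uf T) := by linarith
      _ = energy ρ11 ρ12 ρ22 lam μ q r Ω us uf T := rfl
  rw [hE0u]
  exact mul_le_mul_of_nonneg_right chain hBf_nonneg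
end
end

section
/- Let X be a complex Banach space and let K : X → X be a compact bounded linear operator such that ‖K f‖ < ‖f‖ for every f ∈ X with f ≠ 0. Then the spectral radius of K is strictly less than 1; in particular, the operator I − K is invertible as a bounded linear operator on X. -/
open Metric Set

theorem bdd_below_aux (X : Type*) [NormedAddCommGroup X]
    [NormedSpace ℂ X] [CompleteSpace X] (K : X →L[ℂ] X)
    (hK : IsCompactOperator (K : X → X)) (hc : ∀ f : X, f ≠ 0 → ‖K f‖ < ‖f‖)
    (l : ℂ) (hl : 1 ≤ ‖l‖) : ∃ c > 0, ∀ x : X, c * ‖x‖ ≤ ‖l • x - K x‖ := by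
  by_contra h
  push_neg at h
  have key : ∀ n : ℕ, ∃ u : X, ‖u‖ = 1 ∧ ‖l • u - K u‖ < 1/(n+1) := by
    intro n
    obtain ⟨x, hx⟩ := h (1/(n+1)) (by positivity)
    have hx0 : x ≠ 0 := by rintro rfl; simp at hx
    have hxn : (0:ℝ) < ‖x‖ := norm_pos_iff.mpr hx0
    refine ⟨(‖x‖⁻¹ : ℂ) • x, ?_, ?_⟩
    · rw [norm_smul]
      simp [norm_inv, hxn.ne']
    · have heq : l • ((‖x‖⁻¹ : ℂ) • x) - K ((‖x‖⁻¹ : ℂ) • x)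
          = (‖x‖⁻¹ : ℂ) • (l • x - K x) := by
        rw [map_smul, smul_sub, smul_comm]
      rw [heq, norm_smul]
      have hn : ‖(‖x‖⁻¹ : ℂ)‖ = ‖x‖⁻¹ := by simp [norm_inv]
      rw [hn]
      calc ‖x‖⁻¹ * ‖l • x - K x‖ < ‖x‖⁻¹ * (1/(n+1) * ‖x‖) :=
            mul_lt_mul_of_pos_left hx (by positivity)
        _ = 1/(n+1) := by field_simp
  choose u hu1 hu2 using key
  have hmem : ∀ n, K (u n) ∈ closure (K '' closedBall (0:X) 1) :=
    fun n => subset_closure ⟨u n, by simp [hu1 n], rfl⟩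
  have hcpt : IsCompact (closure ((K : X → X) '' closedBall (0:X) 1)) :=
    IsCompactOperator.isCompact_closure_image_closedBall (f := (K : X →ₗ[ℂ] X)) hK 1
  obtain ⟨y, -, φ, hφ, hy⟩ := hcpt.tendsto_subseq hmem
  have hl0 : l ≠ 0 := by
    intro h0; rw [h0] at hl; simp at hl; linarith
  have htend : Filter.Tendsto (fun n => l • u (φ n) - K (u (φ n))) Filter.atTop (nhds 0) := by
    refine squeeze_zero_norm (a := fun n : ℕ => 1/(n+1)) (fun n => ?_)
      tendsto_one_div_add_atTop_nhds_zero_nat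
    show ‖l • u (φ n) - K (u (φ n))‖ ≤ 1/(n+1)
    have h4 : (n:ℝ) ≤ φ n := by exact_mod_cast hφ.le_apply
    calc ‖l • u (φ n) - K (u (φ n))‖ ≤ 1/(φ n + 1) := (hu2 _).le
      _ ≤ 1/(n+1) := by
          apply div_le_div_of_nonneg_left (by norm_num) (by positivity)
          linarith
  have hlu : Filter.Tendsto (fun n => l • u (φ n)) Filter.atTop (nhds y) := by
    have := htend.add hy
    simpa using this
  have hux : Filter.Tendsto (fun n => u (φ n)) Filter.atTop (nhds (l⁻¹ • y)) := by
    have := hlu.const_smul (l⁻¹)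
    simpa [smul_smul, inv_mul_cancel₀ hl0] using this
  set z := l⁻¹ • y with hz
  have hz1 : ‖z‖ = 1 := by
    have h2 : Filter.Tendsto (fun n => ‖u (φ n)‖) Filter.atTop (nhds ‖z‖) :=
      (continuous_norm.tendsto _).comp hux
    have h3 : (fun n => ‖u (φ n)‖) = fun _ => (1:ℝ) := funext fun n => hu1 _
    rw [h3] at h2
    exact tendsto_nhds_unique h2 tendsto_const_nhds
  have hz0 : z ≠ 0 := by
    intro h0; rw [h0] at hz1; simp at hz1
  have heig : l • z - K z = 0 := by
    have h5 : Filter.Tendsto (fun n => l • u (φ n) - K (u (φ n))) Filter.atTop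
        (nhds (l • z - K z)) := by
      exact (hux.const_smul l).sub ((K.continuous.tendsto _).comp hux)
    exact tendsto_nhds_unique h5 htend
  have : ‖K z‖ = ‖l‖ * ‖z‖ := by
    have : K z = l • z := by
      have := sub_eq_zero.mp heig; rw [← this]
    rw [this, norm_smul]
  have h6 := hc z hz0
  rw [this] at h6
  nlinarith [norm_pos_iff.mpr hz0]

/-- If `K` is a compact operator on a complex Banach space with `‖K f‖ < ‖f‖` for all
nonzero `f`, then the spectral radius of `K` is strictly less than `1`; in particular
`I − K` is invertible. -/
theorem compact_contraction_spectralRadius_lt_one (X : Type*) [NormedAddCommGroup X]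
    [NormedSpace ℂ X] [CompleteSpace X] (K : X →L[ℂ] X)
    (hK : IsCompactOperator (K : X → X)) (hc : ∀ f : X, f ≠ 0 → ‖K f‖ < ‖f‖) :
    spectralRadius ℂ K < 1 ∧ IsUnit ((1 : X →L[ℂ] X) - K) := by
  rcases subsingleton_or_nontrivial X with hX | hX
  · have hsub : Subsingleton (X →L[ℂ] X) :=
      ⟨fun f g => ContinuousLinearMap.ext fun x => Subsingleton.elim _ _⟩
    refine ⟨?_, isUnit_of_subsingleton _⟩
    rw [spectrum.SpectralRadius.of_subsingleton]
    norm_num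
  -- nontrivial case
  obtain ⟨l₀, hl₀σ, hl₀r⟩ := spectrum.exists_nnnorm_eq_spectralRadius (a := K)
  have hmax : ∀ μ ∈ spectrum ℂ K, ‖μ‖ ≤ ‖l₀‖ := by
    intro μ hμ
    have h1 : (‖μ‖₊ : ENNReal) ≤ spectralRadius ℂ K := le_iSup₂ (f := fun k _ => (‖k‖₊ : ENNReal)) μ hμ
    rw [← hl₀r] at h1
    exact_mod_cast h1
  have hlt : ‖l₀‖ < 1 := by
    by_contra hge
    push_neg at hge
    obtain ⟨c, hc0, hcb⟩ := bdd_below_aux X K hK hc l₀ hge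
    have hl₀0 : l₀ ≠ 0 := by
      intro h0; rw [h0] at hge; simp at hge; linarith
    have hl₀pos : (0:ℝ) < ‖l₀‖ := norm_pos_iff.mpr hl₀0
    set s : ℝ := c/4/‖l₀‖ with hs
    have hspos : 0 < s := by positivity
    set l₁ : ℂ := (1 + s : ℝ) * l₀ with hl₁
    have hnorm₁ : ‖l₁‖ = (1+s) * ‖l₀‖ := by
      rw [hl₁, norm_mul, Complex.norm_real, Real.norm_of_nonneg (by linarith)]
    have hdiff : ‖l₁ - l₀‖ = c/4 := by
      have : l₁ - l₀ = (s : ℝ) * l₀ := by rw [hl₁]; push_cast; ring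
      rw [this, norm_mul, Complex.norm_real, Real.norm_of_nonneg hspos.le, hs]
      exact div_mul_cancel₀ _ hl₀pos.ne'
    have hl₁σ : l₁ ∉ spectrum ℂ K := by
      intro hmem
      have := hmax l₁ hmem
      rw [hnorm₁] at this
      nlinarith
    set T₀ : X →L[ℂ] X := l₀ • 1 - K with hT₀
    set T₁ : X →L[ℂ] X := l₁ • 1 - K with hT₁
    have hT₀app : ∀ x : X, T₀ x = l₀ • x - K x := fun x => by
      simp [hT₀, ContinuousLinearMap.sub_apply, ContinuousLinearMap.smul_apply]
    have hT₁app : ∀ x : X, T₁ x = l₁ • x - K x := fun x => by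
      simp [hT₁, ContinuousLinearMap.sub_apply, ContinuousLinearMap.smul_apply]
    have hbb₁ : ∀ x : X, (c/2) * ‖x‖ ≤ ‖T₁ x‖ := by
      intro x
      have h1 : ‖T₁ x - T₀ x‖ = (c/4) * ‖x‖ := by
        rw [hT₁app, hT₀app]
        have : (l₁ • x - K x) - (l₀ • x - K x) = (l₁ - l₀) • x := by
          rw [sub_smul]; abel
        rw [this, norm_smul, hdiff]
      have h2 := hcb x
      rw [← hT₀app x] at h2
      have h3 : ‖T₀ x‖ - ‖T₁ x - T₀ x‖ ≤ ‖T₁ x‖ := by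
        have := norm_sub_norm_le (T₁ x) (T₀ x)
        have h4 := norm_le_insert' (T₀ x) (T₁ x)
        linarith [norm_sub_rev (T₁ x) (T₀ x) ▸ (norm_sub_norm_le (T₀ x) (T₁ x))]
      rw [h1] at h3
      nlinarith [norm_nonneg x]
    have hu₁ : IsUnit T₁ := by
      have := spectrum.notMem_iff.mp hl₁σ
      rwa [Algebra.algebraMap_eq_smul_one] at this
    obtain ⟨e, he⟩ := hu₁
    have hinv : ‖((e⁻¹ : (X →L[ℂ] X)ˣ) : X →L[ℂ] X)‖ ≤ (c/2)⁻¹ := by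
      apply ContinuousLinearMap.opNorm_le_bound _ (by positivity)
      intro y
      have h5 : T₁ (((e⁻¹ : (X →L[ℂ] X)ˣ) : X →L[ℂ] X) y) = y := by
        rw [← he]
        have : (e : X →L[ℂ] X) (((e⁻¹ : (X →L[ℂ] X)ˣ) : X →L[ℂ] X) y)
            = ((e : X →L[ℂ] X) * ((e⁻¹ : (X →L[ℂ] X)ˣ) : X →L[ℂ] X)) y := rfl
        rw [this, e.mul_inv, ContinuousLinearMap.one_apply]
      have h6 := hbb₁ (((e⁻¹ : (X →L[ℂ] X)ˣ) : X →L[ℂ] X) y)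
      rw [h5] at h6
      rw [inv_mul_eq_div, le_div_iff₀ (by positivity)]
      linarith
    have hinvpos : (0:ℝ) < ‖((e⁻¹ : (X →L[ℂ] X)ˣ) : X →L[ℂ] X)‖ := Units.norm_pos e⁻¹
    have hnear : ‖T₀ - (e : X →L[ℂ] X)‖ < ‖((e⁻¹ : (X →L[ℂ] X)ˣ) : X →L[ℂ] X)‖⁻¹ := by
      rw [he]
      have h7 : T₀ - T₁ = (l₀ - l₁) • (1 : X →L[ℂ] X) := by
        rw [hT₀, hT₁, sub_smul]; abel
      have h8 : ‖T₀ - T₁‖ = c/4 := by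
        have h81 := norm_smul (l₀ - l₁) (1 : X →L[ℂ] X)
        rw [h7, h81, norm_one, mul_one, norm_sub_rev, hdiff]
      rw [h8]
      have h9 : ‖((e⁻¹ : (X →L[ℂ] X)ˣ) : X →L[ℂ] X)‖⁻¹ ≥ c/2 := by
        rw [ge_iff_le, ← inv_inv (c/2)]
        exact inv_anti₀ (by positivity) hinv
      linarith
    have hT0unit : IsUnit T₀ := (e.ofNearby T₀ hnear).isUnit
    have hT0' : IsUnit (algebraMap ℂ (X →L[ℂ] X) l₀ - K) := by
      rwa [Algebra.algebraMap_eq_smul_one]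
    exact spectrum.notMem_iff.mpr hT0' hl₀σ
  constructor
  · rw [← hl₀r]
    exact_mod_cast hlt
  · have h1 : (1:ℂ) ∉ spectrum ℂ K := by
      intro hmem
      have h2 := hmax 1 hmem
      rw [norm_one] at h2
      linarith
    have := spectrum.notMem_iff.mp h1
    rwa [map_one] at this
end
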